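/- arXiv:1812.01953 — 9 statements merged into one kernel-verified Lean document; each statement's English description precedes it below -/
import Mathlib

section
/- If W : ℝ → ℝ is C², nonnegative, convex, vanishes only at 0, and satisfies ∫_{|u|>1} du/√(W(u)) < ∞, then for every λ > 0 the quantity l(λ) = ∫₀^∞ ds/√(2(W(s+λ) − W(λ))) is finite and positive. -/
open MeasureTheory Set

/-!
Fix `λ > 0` and let `g(s) = 2 (W(s + λ) - W(λ))`. Since `W(0) = 0`, convexity makes the
increments of `W` beyond `λ` dominate the secant slope `W(λ)/λ > 0` through the origin, so
`g(s) ≥ 2 W(λ) s / λ`: near `s = 0` the integrand is `O(s^{-1/2})`. For `s ≥ λ` the same bound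
gives `W(s + λ) ≥ 2 W(λ)`, hence `g(s) ≥ W(s + λ) ≥ W(s)`, and the tail is dominated by the
integrable `1/√W`. The integrand is positive on `(0, ∞)`, so its integral is positive.
-/

section Convex

variable {W : ℝ → ℝ}

theorem ConvexOn.slope_mul_le_sub_of_map_zero (hconv : ConvexOn ℝ univ W) (h0 : W 0 = 0)
    {lam s : ℝ} (hlam : 0 < lam) (hs : 0 ≤ s) : W lam / lam * s ≤ W (s + lam) - W lam := by
  rcases hs.eq_or_lt with rfl | hs
  · simp
  have h := hconv.slope_mono_adjacent (mem_univ 0) (mem_univ (s + lam)) hlam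
    (lt_add_of_pos_left lam hs)
  rw [h0, sub_zero, sub_zero, add_sub_cancel_right, le_div_iff₀ hs] at h
  exact h

theorem ConvexOn.le_two_mul_sub_of_map_zero (hconv : ConvexOn ℝ univ W) (h0 : W 0 = 0)
    (hnn : ∀ t, 0 ≤ W t) {lam s : ℝ} (hlam : 0 < lam) (hs : lam ≤ s) :
    W s ≤ 2 * (W (s + lam) - W lam) := by
  have hslope : 0 ≤ W lam / lam := div_nonneg (hnn lam) hlam.le
  have hmono : W s ≤ W (s + lam) := by
    have := hconv.slope_mul_le_sub_of_map_zero h0 (hlam.trans_le hs) hlam.le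
    rw [add_comm] at this
    linarith [mul_nonneg (div_nonneg (hnn s) (hlam.trans_le hs).le) hlam.le]
  have hdouble : W lam ≤ W (s + lam) - W lam := by
    have := hconv.slope_mul_le_sub_of_map_zero h0 hlam (hlam.le.trans hs)
    calc W lam = W lam / lam * lam := by field_simp
      _ ≤ W lam / lam * s := mul_le_mul_of_nonneg_left hs hslope
      _ ≤ W (s + lam) - W lam := this
  linarith

end Convex

section Integrability

variable {X : Type*} [MeasurableSpace X] {μ : Measure X}

theorem IntegrableOn.one_div_sqrt_of_le {f g : X → ℝ} {S : Set X} (hS : MeasurableSet S)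
    (hf : IntegrableOn (fun x => 1 / √(f x)) S μ) (hg : Measurable g)
    (hfg : ∀ x ∈ S, 0 < f x ∧ f x ≤ g x) : IntegrableOn (fun x => 1 / √(g x)) S μ := by
  have hmeas : Measurable fun x => 1 / √(g x) := by fun_prop
  refine hf.integrable.mono hmeas.aestronglyMeasurable
    ((ae_restrict_iff' hS).2 (.of_forall fun x hx => ?_))
  obtain ⟨hfx, hfgx⟩ := hfg x hx
  rw [Real.norm_of_nonneg (by positivity), Real.norm_of_nonneg (by positivity)]
  exact one_div_le_one_div_of_le (Real.sqrt_pos.2 hfx) (Real.sqrt_le_sqrt hfgx)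

theorem setIntegral_pos_of_forall_pos {f : X → ℝ} {S : Set X} (hS : MeasurableSet S)
    (hμS : μ S ≠ 0) (hf : IntegrableOn f S μ) (hpos : ∀ x ∈ S, 0 < f x) :
    0 < ∫ x in S, f x ∂μ := by
  rw [setIntegral_pos_iff_support_of_nonneg_ae
    ((ae_restrict_iff' hS).2 (.of_forall fun x hx => (hpos x hx).le)) hf,
    inter_eq_right.2 fun x hx => Function.mem_support.2 (hpos x hx).ne']
  exact pos_iff_ne_zero.2 hμS

end Integrability

theorem integrableOn_one_div_sqrt_const_mul_Ioc {c : ℝ} (hc : 0 < c) (T : ℝ) :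
    IntegrableOn (fun s => 1 / √(c * s)) (Ioc 0 T) := by
  have hrpow : IntegrableOn (fun s : ℝ => s ^ (-(1 / 2) : ℝ)) (Ioc 0 T) :=
    (intervalIntegral.intervalIntegrable_rpow' (by norm_num)).1.mono_set Ioc_subset_uIoc
  refine IntegrableOn.congr_fun (hrpow.const_mul (√c)⁻¹) (fun s (hs : 0 < s ∧ _) => ?_)
    measurableSet_Ioc
  rw [Real.rpow_neg hs.1.le, ← Real.sqrt_eq_rpow, Real.sqrt_mul hc.le, one_div, mul_inv]

theorem blowup_length_finite_pos_general
    (W : ℝ → ℝ) (hWnn : ∀ t, 0 ≤ W t)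
    (hWconv : ConvexOn ℝ Set.univ W) (hWvan : ∀ t, W t = 0 ↔ t = 0)
    (hWint : IntegrableOn (fun u => 1 / Real.sqrt (W u)) {u : ℝ | 1 < |u|}) :
    ∀ lam : ℝ, 0 < lam →
      IntegrableOn (fun s => 1 / Real.sqrt (2 * (W (s + lam) - W lam))) (Ioi (0:ℝ)) ∧
      0 < ∫ s in Ioi (0:ℝ), 1 / Real.sqrt (2 * (W (s + lam) - W lam)) := by
  intro lam hlam
  have hW0 : W 0 = 0 := (hWvan 0).2 rfl
  have hWpos : ∀ t, 0 < t → 0 < W t := fun t ht =>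
    (hWnn t).lt_of_ne' fun h => ht.ne' ((hWvan t).1 h)
  have hslope : 0 < 2 * (W lam / lam) := by have := hWpos lam hlam; positivity
  have hlin : ∀ s, 0 < s → 2 * (W lam / lam) * s ≤ 2 * (W (s + lam) - W lam) := fun s hs => by
    linarith [hWconv.slope_mul_le_sub_of_map_zero hW0 hlam hs.le]
  have hmeas : Measurable fun s => 2 * (W (s + lam) - W lam) := by
    have := continuousOn_univ.1 (hWconv.continuousOn isOpen_univ)
    fun_prop
  have hnear : IntegrableOn (fun s => 1 / √(2 * (W (s + lam) - W lam))) (Ioc 0 (max 1 lam)) :=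
    IntegrableOn.one_div_sqrt_of_le measurableSet_Ioc
      (integrableOn_one_div_sqrt_const_mul_Ioc hslope _) hmeas
      fun s hs => ⟨mul_pos hslope hs.1, hlin s hs.1⟩
  have htail : IntegrableOn (fun s => 1 / √(2 * (W (s + lam) - W lam))) (Ioi (max 1 lam)) := by
    refine IntegrableOn.one_div_sqrt_of_le measurableSet_Ioi
      (hWint.mono_set fun u (hu : max 1 lam < u) => ?_) hmeas fun s (hs : max 1 lam < s) =>
        ⟨hWpos s ((lt_max_of_lt_left one_pos).trans hs),
          hWconv.le_two_mul_sub_of_map_zero hW0 hWnn hlam ?_⟩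
    · exact (max_lt_iff.1 hu).1.trans_le (le_abs_self u)
    · exact (le_max_right 1 lam).trans hs.le
  have hint := Ioc_union_Ioi_eq_Ioi (zero_le_one.trans (le_max_left 1 lam)) ▸ hnear.union htail
  refine ⟨hint, setIntegral_pos_of_forall_pos measurableSet_Ioi (by simp) hint fun s hs => ?_⟩
  exact one_div_pos.2 (Real.sqrt_pos.2 ((mul_pos hslope hs).trans_le (hlin s hs)))

theorem blowup_length_finite_pos
    (W : ℝ → ℝ) (hW : ContDiff ℝ 2 W) (hWnn : ∀ t, 0 ≤ W t)
    (hWconv : ConvexOn ℝ Set.univ W) (hWvan : ∀ t, W t = 0 ↔ t = 0)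
    (hWint : IntegrableOn (fun u => 1 / Real.sqrt (W u)) {u : ℝ | 1 < |u|}) :
    ∀ lam : ℝ, 0 < lam →
      IntegrableOn (fun s => 1 / Real.sqrt (2 * (W (s + lam) - W lam))) (Ioi (0:ℝ)) ∧
      0 < ∫ s in Ioi (0:ℝ), 1 / Real.sqrt (2 * (W (s + lam) - W lam)) :=
  blowup_length_finite_pos_general W hWnn hWconv hWvan hWint
end

section
/- Under the hypotheses on W, the function λ ↦ l(λ) = ∫₀^∞ ds/√(2(W(s+λ) − W(λ))) is strictly decreasing on (0,∞). -/
open MeasureTheory Set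

lemma conv_inc {W : ℝ → ℝ} (hWconv : ConvexOn ℝ Set.univ W) {a b c : ℝ}
    (hab : a ≤ b) (hc : 0 ≤ c) : W (a + c) + W b ≤ W a + W (b + c) := by
  rcases hab.eq_or_lt with rfl | hab
  · linarith
  rcases hc.eq_or_lt with rfl | hc
  · simp
  have hd : (0:ℝ) < b + c - a := by linarith
  have hp : 0 ≤ c / (b + c - a) := by positivity
  have hq : 0 ≤ (b - a) / (b + c - a) := div_nonneg (by linarith) hd.le
  have hpq : (b - a) / (b + c - a) + c / (b + c - a) = 1 := by field_simp; ring
  have h1 := hWconv.2 (mem_univ a) (mem_univ (b + c)) hq hp hpq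
  have h2 := hWconv.2 (mem_univ a) (mem_univ (b + c)) hp hq (by linarith)
  rw [smul_eq_mul, smul_eq_mul] at h1 h2
  have e1 : (b - a) / (b + c - a) * a + c / (b + c - a) * (b + c) = a + c := by
    field_simp; ring
  have e2 : c / (b + c - a) * a + (b - a) / (b + c - a) * (b + c) = b := by
    field_simp; ring
  rw [e1] at h1; rw [e2] at h2
  have h3 := add_le_add h1 h2
  calc W (a + c) + W b ≤ ((b - a) / (b + c - a) * W a + c / (b + c - a) * W (b + c))
        + (c / (b + c - a) * W a + (b - a) / (b + c - a) * W (b + c)) := h3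
    _ = ((b - a) / (b + c - a) + c / (b + c - a)) * W a
        + ((b - a) / (b + c - a) + c / (b + c - a)) * W (b + c) := by ring
    _ = W a + W (b + c) := by rw [hpq, one_mul, one_mul]

lemma slope_low {W : ℝ → ℝ} (hWconv : ConvexOn ℝ Set.univ W) (hW0 : W 0 = 0)
    {lam s : ℝ} (hlam : 0 < lam) (hs : 0 < s) :
    W lam / lam * s ≤ W (s + lam) - W lam := by
  have h := hWconv.slope_mono_adjacent (mem_univ 0) (mem_univ (s + lam)) hlam (by linarith)
  rw [hW0] at h
  have h' : W lam / lam ≤ (W (s + lam) - W lam) / s := by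
    have e1 : lam - 0 = lam := by ring
    have e2 : s + lam - lam = s := by ring
    rw [sub_zero, e1, e2] at h
    exact h
  calc W lam / lam * s ≤ (W (s + lam) - W lam) / s * s :=
        mul_le_mul_of_nonneg_right h' hs.le
    _ = W (s + lam) - W lam := div_mul_cancel₀ _ hs.ne'

lemma shift_int {f : ℝ → ℝ} {a c : ℝ} (h : IntegrableOn f (Ioi (a + c))) :
    IntegrableOn (fun x => f (x + c)) (Ioi a) := by
  have A : MeasurableEmbedding (fun x : ℝ => x + c) :=
    (Homeomorph.addRight c).isClosedEmbedding.measurableEmbedding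
  rw [← map_add_right_eq_self volume c] at h
  have h2 := (A.integrableOn_map_iff).mp h
  have : (fun x : ℝ => x + c) ⁻¹' Ioi (a + c) = Ioi a := by
    rw [preimage_add_const_Ioi, add_sub_cancel_right]
  rwa [this] at h2

lemma exists_big_slope {W : ℝ → ℝ}
    (hWlampos : ∀ t : ℝ, 0 < t → 0 < W t) (hWnn : ∀ t, 0 ≤ W t)
    (hWint : IntegrableOn (fun u => 1 / Real.sqrt (W u)) {u : ℝ | 1 < |u|})
    {lam1 : ℝ} (h1 : 0 < lam1) (K : ℝ) :
    ∃ s0 : ℝ, 0 < s0 ∧ K * s0 < W (lam1 + s0) - W lam1 := by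
  by_contra hcon
  push_neg at hcon
  set M : ℝ := lam1 + 1 with hM
  have hM1 : (1:ℝ) < M := by rw [hM]; linarith
  have hM0 : (0:ℝ) < M := by linarith
  set C : ℝ := W lam1 + |K| + 1 with hC
  have hCpos : 0 < C := by rw [hC]; have := hWnn lam1; have := abs_nonneg K; linarith
  have hbound : ∀ u : ℝ, M ≤ u → W u ≤ C * u := by
    intro u hu
    have hs0 : 0 < u - lam1 := by linarith
    have h := hcon (u - lam1) hs0
    have e : lam1 + (u - lam1) = u := by ring
    rw [e] at h
    have h2 : W u ≤ W lam1 + K * (u - lam1) := by linarith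
    have h3 : K * (u - lam1) ≤ |K| * u := by
      calc K * (u - lam1) ≤ |K * (u - lam1)| := le_abs_self _
        _ = |K| * |u - lam1| := abs_mul _ _
        _ ≤ |K| * u := by
            apply mul_le_mul_of_nonneg_left _ (abs_nonneg K)
            rw [abs_of_pos hs0]; linarith
    have h4 : W lam1 ≤ (W lam1 + 1) * u := by
      nlinarith [hWnn lam1]
    calc W u ≤ W lam1 + K * (u - lam1) := h2
      _ ≤ (W lam1 + 1) * u + |K| * u := by linarith
      _ = C * u := by rw [hC]; ring
  have hint : IntegrableOn (fun u => 1 / Real.sqrt (W u)) (Ioi M) := by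
    apply hWint.mono_set
    intro u hu
    have h5 : (1:ℝ) < u := lt_trans hM1 (mem_Ioi.mp hu)
    simpa [abs_of_pos (lt_trans one_pos h5)] using h5
  have hrint : IntegrableOn (fun u : ℝ => (Real.sqrt C)⁻¹ * u ^ (-(1/2) : ℝ)) (Ioi M) := by
    refine hint.mono' (((by fun_prop : Measurable (fun u : ℝ => (Real.sqrt C)⁻¹ * u ^ (-(1/2) : ℝ)))).aestronglyMeasurable.restrict) ?_
    rw [ae_restrict_iff' measurableSet_Ioi]
    filter_upwards with u hu
    have hu0 : 0 < u := lt_trans hM0 (mem_Ioi.mp hu)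
    have hWu : 0 < W u := hWlampos u hu0
    have e : (Real.sqrt C)⁻¹ * u ^ (-(1/2) : ℝ) = 1 / Real.sqrt (C * u) := by
      rw [Real.rpow_neg hu0.le, ← Real.sqrt_eq_rpow, ← mul_inv,
        ← Real.sqrt_mul hCpos.le, one_div]
    have hnn : 0 ≤ (Real.sqrt C)⁻¹ * u ^ (-(1/2) : ℝ) := by positivity
    rw [Real.norm_eq_abs, abs_of_nonneg hnn, e]
    apply one_div_le_one_div_of_le (Real.sqrt_pos.mpr hWu)
    exact Real.sqrt_le_sqrt (hbound u (le_of_lt (mem_Ioi.mp hu)))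
  have hrint2 : IntegrableOn (fun u : ℝ => u ^ (-(1/2) : ℝ)) (Ioi M) := by
    have h4 := hrint.const_mul (Real.sqrt C)
    have hsC : Real.sqrt C ≠ 0 := ne_of_gt (Real.sqrt_pos.mpr hCpos)
    refine IntegrableOn.congr_fun h4 (fun u _ => ?_) measurableSet_Ioi
    field_simp
  rw [integrableOn_Ioi_rpow_iff hM0] at hrint2
  norm_num at hrint2

lemma integrable_f {W : ℝ → ℝ} (hcont : Continuous W) (hWconv : ConvexOn ℝ Set.univ W)
    (hWnn : ∀ t, 0 ≤ W t) (hW0 : W 0 = 0) (hWlampos : ∀ t : ℝ, 0 < t → 0 < W t)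
    (hWint : IntegrableOn (fun u => 1 / Real.sqrt (W u)) {u : ℝ | 1 < |u|})
    {lam : ℝ} (hlam : 0 < lam) :
    IntegrableOn (fun s => 1 / Real.sqrt (2 * (W (s + lam) - W lam))) (Ioi 0) := by
  set f : ℝ → ℝ := fun s => 1 / Real.sqrt (2 * (W (s + lam) - W lam)) with hf
  have hWl : 0 < W lam := hWlampos lam hlam
  set c : ℝ := W lam / lam with hc
  have hcpos : 0 < c := div_pos hWl hlam
  have meas : Measurable f := by
    apply Measurable.div measurable_const
    exact (Real.continuous_sqrt.comp (by fun_prop)).measurable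
  set T : ℝ := max lam 1 with hT
  have hT1 : (1:ℝ) ≤ T := le_max_right _ _
  have hTl : lam ≤ T := le_max_left _ _
  have hT0 : (0:ℝ) < T := lt_of_lt_of_le one_pos hT1
  -- part 1 : on Ioc 0 T
  have part1 : IntegrableOn f (Ioc 0 T) := by
    have hint : IntegrableOn (fun s : ℝ => (Real.sqrt (2 * c))⁻¹ * s ^ (-(1/2) : ℝ)) (Ioc 0 T) := by
      have h1 : IntervalIntegrable (fun s : ℝ => s ^ (-(1/2) : ℝ)) volume 0 T :=
        intervalIntegral.intervalIntegrable_rpow' (by norm_num)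
      have h2 := (h1.const_mul ((Real.sqrt (2 * c))⁻¹))
      exact (intervalIntegrable_iff_integrableOn_Ioc_of_le hT0.le).mp h2
    refine hint.mono' (meas.aestronglyMeasurable.restrict) ?_
    rw [ae_restrict_iff' measurableSet_Ioc]
    filter_upwards with s hs
    obtain ⟨hs0, hsT⟩ := hs
    have hD : c * s ≤ W (s + lam) - W lam := by
      have := slope_low hWconv hW0 hlam hs0
      linarith
    have hcs : 0 < 2 * (c * s) := by positivity
    have key : f s ≤ (Real.sqrt (2 * c))⁻¹ * s ^ (-(1/2) : ℝ) := by
      have e : (Real.sqrt (2 * c))⁻¹ * s ^ (-(1/2) : ℝ) = 1 / Real.sqrt (2 * (c * s)) := by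
        rw [Real.rpow_neg hs0.le, ← Real.sqrt_eq_rpow, ← mul_inv,
          ← Real.sqrt_mul (by positivity : (0:ℝ) ≤ 2 * c),
          show (2 * c) * s = 2 * (c * s) by ring, one_div]
      rw [e, hf]
      apply one_div_le_one_div_of_le (Real.sqrt_pos.mpr hcs)
      exact Real.sqrt_le_sqrt (by linarith)
    have hfnn : 0 ≤ f s := by positivity
    rw [Real.norm_eq_abs, abs_of_nonneg hfnn]
    exact key
  -- part 2 : on Ioi T
  have part2 : IntegrableOn f (Ioi T) := by
    have base : IntegrableOn (fun u => 1 / Real.sqrt (W u)) (Ioi (T + lam)) := by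
      apply hWint.mono_set
      intro u hu
      have : (1:ℝ) < u := by
        have := mem_Ioi.mp hu; linarith
      simpa [abs_of_pos (lt_trans one_pos this)] using this
    have shifted : IntegrableOn (fun s => 1 / Real.sqrt (W (s + lam))) (Ioi T) :=
      shift_int (f := fun u => 1 / Real.sqrt (W u)) (a := T) (c := lam) base
    refine shifted.mono' (meas.aestronglyMeasurable.restrict) ?_
    rw [ae_restrict_iff' measurableSet_Ioi]
    filter_upwards with s hs
    have hsT : T < s := mem_Ioi.mp hs
    have hs0 : 0 < s := lt_trans hT0 hsT
    have hWs : W lam ≤ W (s + lam) - W lam := by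
      have h1 := slope_low hWconv hW0 hlam hs0
      have h2 : W lam ≤ c * s := by
        rw [hc]
        calc W lam = W lam / lam * lam := by field_simp
          _ ≤ W lam / lam * s := by
              apply mul_le_mul_of_nonneg_left _ (le_of_lt (div_pos hWl hlam))
              linarith
      linarith
    have hWspos : 0 < W (s + lam) := by linarith
    have key : f s ≤ 1 / Real.sqrt (W (s + lam)) := by
      rw [hf]
      apply one_div_le_one_div_of_le (Real.sqrt_pos.mpr hWspos)
      exact Real.sqrt_le_sqrt (by linarith)
    have hfnn : 0 ≤ f s := by positivity
    rw [Real.norm_eq_abs, abs_of_nonneg hfnn]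
    exact key
  have : Ioi (0:ℝ) = Ioc 0 T ∪ Ioi T := (Ioc_union_Ioi_eq_Ioi hT0.le).symm
  rw [this]
  exact part1.union part2
theorem blowup_length_strictAnti
    (W : ℝ → ℝ) (hW : ContDiff ℝ 2 W) (hWnn : ∀ t, 0 ≤ W t)
    (hWconv : ConvexOn ℝ Set.univ W) (hWvan : ∀ t, W t = 0 ↔ t = 0)
    (hWint : IntegrableOn (fun u => 1 / Real.sqrt (W u)) {u : ℝ | 1 < |u|}) :
    StrictAntiOn
      (fun lam => ∫ s in Ioi (0:ℝ), 1 / Real.sqrt (2 * (W (s + lam) - W lam)))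
      (Ioi (0:ℝ)) := by
  have hW0 : W 0 = 0 := (hWvan 0).mpr rfl
  have hWlampos : ∀ t : ℝ, 0 < t → 0 < W t := fun t ht =>
    lt_of_le_of_ne (hWnn t) fun h => (ne_of_gt ht) ((hWvan t).mp h.symm)
  have hcont : Continuous W := hW.continuous
  intro lam1 h1 lam2 h2 h12
  rw [mem_Ioi] at h1 h2
  set f1 : ℝ → ℝ := fun s => 1 / Real.sqrt (2 * (W (s + lam1) - W lam1)) with hf1
  set f2 : ℝ → ℝ := fun s => 1 / Real.sqrt (2 * (W (s + lam2) - W lam2)) with hf2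
  have int1 : IntegrableOn f1 (Ioi 0) :=
    integrable_f hcont hWconv hWnn hW0 hWlampos hWint h1
  have int2 : IntegrableOn f2 (Ioi 0) :=
    integrable_f hcont hWconv hWnn hW0 hWlampos hWint (lt_trans h1 h12)
  have hD1pos : ∀ s : ℝ, 0 < s → 0 < W (s + lam1) - W lam1 := by
    intro s hs
    have h := slope_low hWconv hW0 h1 hs
    have h' : 0 < W lam1 / lam1 * s := mul_pos (div_pos (hWlampos lam1 h1) h1) hs
    linarith
  have hD12 : ∀ s : ℝ, 0 < s → W (s + lam1) - W lam1 ≤ W (s + lam2) - W lam2 := by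
    intro s hs
    have h := conv_inc hWconv (le_of_lt h12) hs.le
    rw [add_comm lam1 s, add_comm lam2 s] at h
    linarith
  have hle : ∀ s ∈ Ioi (0:ℝ), f2 s ≤ f1 s := by
    intro s hs
    rw [mem_Ioi] at hs
    have d1 := hD1pos s hs
    have d12 := hD12 s hs
    rw [hf1, hf2]
    apply one_div_le_one_div_of_le (Real.sqrt_pos.mpr (by linarith))
    exact Real.sqrt_le_sqrt (by linarith)
  set K : ℝ := (W lam2 - W lam1) / (lam2 - lam1) with hK
  obtain ⟨s0, hs0pos, hs0⟩ := exists_big_slope hWlampos hWnn hWint h1 K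
  have hdpos : (0:ℝ) < lam2 - lam1 := by linarith
  have hstrict : ∀ s : ℝ, s0 < s → f2 s < f1 s := by
    intro s hs
    have hss : 0 < s := lt_trans hs0pos hs
    have c1 := hWconv.slope_mono_adjacent (mem_univ lam1) (mem_univ (lam1 + s))
      (by linarith : lam1 < lam1 + s0) (by linarith : lam1 + s0 < lam1 + s)
    have c2 := hWconv.slope_mono_adjacent (mem_univ (lam1 + s0)) (mem_univ (lam2 + s))
      (by linarith : lam1 + s0 < lam1 + s) (by linarith : lam1 + s < lam2 + s)
    rw [show lam1 + s0 - lam1 = s0 by ring] at c1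
    rw [show lam2 + s - (lam1 + s) = lam2 - lam1 by ring] at c2
    have hKA : K < (W (lam1 + s0) - W lam1) / s0 := (lt_div_iff₀ hs0pos).mpr hs0
    have hA : K < (W (lam2 + s) - W (lam1 + s)) / (lam2 - lam1) :=
      lt_of_lt_of_le hKA (le_trans c1 c2)
    have key : W lam2 - W lam1 < W (lam2 + s) - W (lam1 + s) := by
      have h := mul_lt_mul_of_pos_right hA hdpos
      rw [div_mul_cancel₀ _ (ne_of_gt hdpos), div_mul_cancel₀ _ (ne_of_gt hdpos)] at h
      exact h
    rw [add_comm lam1 s, add_comm lam2 s] at key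
    have d1 := hD1pos s hss
    have d2 : W (s + lam1) - W lam1 < W (s + lam2) - W lam2 := by linarith
    rw [hf1, hf2]
    apply one_div_lt_one_div_of_lt (Real.sqrt_pos.mpr (by linarith))
    exact Real.sqrt_lt_sqrt (by linarith) (by linarith)
  have hsub_nonneg : 0 ≤ᵐ[volume.restrict (Ioi (0:ℝ))] fun s => f1 s - f2 s := by
    filter_upwards [ae_restrict_mem measurableSet_Ioi] with s hs
    simp only [Pi.zero_apply]
    have := hle s hs
    linarith
  have hintsub : IntegrableOn (fun s => f1 s - f2 s) (Ioi 0) := int1.sub int2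
  have hpos : 0 < ∫ s in Ioi (0:ℝ), (f1 s - f2 s) := by
    rw [setIntegral_pos_iff_support_of_nonneg_ae hsub_nonneg hintsub]
    refine lt_of_lt_of_le ?_ (measure_mono (?_ : Ioi s0 ⊆ _))
    · rw [Real.volume_Ioi]
      exact ENNReal.zero_lt_top
    · intro s hs
      rw [mem_Ioi] at hs
      constructor
      · rw [Function.mem_support]
        exact ne_of_gt (sub_pos.mpr (hstrict s hs))
      · exact mem_Ioi.mpr (lt_trans hs0pos hs)
  rw [integral_sub int1 int2] at hpos
  show (∫ s in Ioi (0:ℝ), f2 s) < ∫ s in Ioi (0:ℝ), f1 s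
  linarith
end

section
/- Under the hypotheses on W, lim_{λ→∞} l(λ) = 0, where l(λ) = ∫₀^∞ ds/√(2(W(s+λ) − W(λ))). -/
/-!
Since `W` is convex with `W 0 = 0`, its slope on `[λ, λ + s]` is at least `W λ / λ`, so
`W (s + λ) - W λ ≥ s W(λ) / λ` for `s > 0`, and `W (s + λ) - W λ ≥ W (s + λ) / 2` for `s ≥ λ`.
Splitting the integral at `s = λ` gives `l(λ) ≤ 2 λ / √W(λ) + ∫_{2λ}^∞ du / √W(u)`.
As `W` is nondecreasing on `[0, ∞)`, `λ / √W(λ) ≤ 2 ∫_{λ/2}^λ du / √W(u)`, so `l(λ)` is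
bounded by tails of the convergent integral `∫_1^∞ du / √W(u)`, which tend to `0`.
-/

open MeasureTheory Set Filter

lemma Real.inv_sqrt_eq_rpow {x : ℝ} (hx : 0 ≤ x) : (√x)⁻¹ = x ^ (-(1 / 2) : ℝ) := by
  rw [Real.rpow_neg hx, Real.sqrt_eq_rpow]

lemma integrableOn_Ioc_inv_sqrt (b : ℝ) : IntegrableOn (fun s : ℝ => (√s)⁻¹) (Ioc 0 b) :=
  (intervalIntegral.intervalIntegrable_rpow' (by norm_num)).1.congr_fun
    (fun _ hs => (Real.inv_sqrt_eq_rpow (le_of_lt hs.1)).symm) measurableSet_Ioc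

lemma integral_Ioc_inv_sqrt {b : ℝ} (hb : 0 ≤ b) : ∫ s in Ioc 0 b, (√s)⁻¹ = 2 * √b := by
  rw [setIntegral_congr_fun measurableSet_Ioc fun s hs => Real.inv_sqrt_eq_rpow (le_of_lt hs.1),
    ← intervalIntegral.integral_of_le hb, integral_rpow (by norm_num),
    Real.zero_rpow (by norm_num), Real.sqrt_eq_rpow]
  norm_num
  ring

lemma setIntegral_Ioi_comp_add_right {E : Type*} [NormedAddCommGroup E] [NormedSpace ℝ E]
    (f : ℝ → E) (a c : ℝ) : ∫ x in Ioi a, f (x + c) = ∫ x in Ioi (a + c), f x := by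
  simpa [preimage_add_const_Ioi] using
    (measurePreserving_add_right volume c).setIntegral_preimage_emb
      (measurableEmbedding_addRight c) f (Ioi (a + c))

lemma integrableOn_Ioi_comp_add_right_iff {E : Type*} [NormedAddCommGroup E]
    {f : ℝ → E} {a c : ℝ} :
    IntegrableOn (fun x => f (x + c)) (Ioi a) ↔ IntegrableOn f (Ioi (a + c)) := by
  simpa [preimage_add_const_Ioi, Function.comp_def] using
    (measurePreserving_add_right volume c).integrableOn_comp_preimage
      (measurableEmbedding_addRight c) (f := f) (s := Ioi (a + c))

lemma setIntegral_union_le_add {α : Type*} [MeasurableSpace α] {μ : Measure α}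
    {f φ ψ : α → ℝ} {s t : Set α} (hst : Disjoint s t) (hs : MeasurableSet s)
    (ht : MeasurableSet t) (hf : ∀ x ∈ s ∪ t, 0 ≤ f x) (hφ : IntegrableOn φ s μ)
    (hψ : IntegrableOn ψ t μ) (hfφ : ∀ x ∈ s, f x ≤ φ x) (hfψ : ∀ x ∈ t, f x ≤ ψ x) :
    ∫ x in s ∪ t, f x ∂μ ≤ ∫ x in s, φ x ∂μ + ∫ x in t, ψ x ∂μ := by
  classical
  set g := s.piecewise φ ψ
  have hgφ : EqOn g φ s := fun x hx => piecewise_eq_of_mem _ _ _ hx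
  have hgψ : EqOn g ψ t := fun x hx => piecewise_eq_of_notMem _ _ _ (hst.notMem_of_mem_right hx)
  have hgs : IntegrableOn g s μ := hφ.congr_fun hgφ.symm hs
  have hgt : IntegrableOn g t μ := hψ.congr_fun hgψ.symm ht
  calc ∫ x in s ∪ t, f x ∂μ ≤ ∫ x in s ∪ t, g x ∂μ := by
        refine integral_mono_of_nonneg ((ae_restrict_iff' (hs.union ht)).2 (.of_forall hf))
          (hgs.union hgt) ((ae_restrict_iff' (hs.union ht)).2 (.of_forall fun x hx => ?_))
        rcases hx with hx | hx
        · rw [hgφ hx]; exact hfφ x hx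
        · rw [hgψ hx]; exact hfψ x hx
    _ = ∫ x in s, φ x ∂μ + ∫ x in t, ψ x ∂μ := by
        rw [setIntegral_union hst ht hgs hgt, setIntegral_congr_fun hs hgφ,
          setIntegral_congr_fun ht hgψ]

lemma AntitoneOn.sub_mul_le_setIntegral_Ioi {g : ℝ → ℝ} {a b : ℝ} (hab : a ≤ b)
    (hg : AntitoneOn g (Ioc a b)) (hnn : ∀ x ∈ Ioi a, 0 ≤ g x) (hint : IntegrableOn g (Ioi a)) :
    (b - a) * g b ≤ ∫ x in Ioi a, g x := by
  calc (b - a) * g b = g b * volume.real (Ioc a b) := by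
        rw [Real.volume_real_Ioc, max_eq_left (sub_nonneg.2 hab), mul_comm]
    _ ≤ ∫ x in Ioc a b, g x :=
        setIntegral_ge_of_const_le_real measurableSet_Ioc measure_Ioc_lt_top.ne
          (fun x hx => hg hx ⟨hx.1.trans_le hx.2, le_rfl⟩ hx.2) (hint.mono_set Ioc_subset_Ioi_self)
    _ ≤ ∫ x in Ioi a, g x :=
        setIntegral_mono_set hint ((ae_restrict_iff' measurableSet_Ioi).2 (.of_forall hnn))
          Ioc_subset_Ioi_self.eventuallyLE

section ConvexFromZero

variable {W : ℝ → ℝ}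

lemma ConvexOn.div_mul_le_sub_of_map_zero (hconv : ConvexOn ℝ (Ici 0) W) (h0 : W 0 = 0)
    {lam s : ℝ} (hlam : 0 < lam) (hs : 0 < s) : W lam / lam * s ≤ W (s + lam) - W lam := by
  have := hconv.slope_mono_adjacent self_mem_Ici (mem_Ici.2 (by linarith)) hlam
    (lt_add_of_pos_left lam hs)
  rwa [h0, sub_zero, sub_zero, add_sub_cancel_right, le_div_iff₀ hs] at this

lemma ConvexOn.map_le_sub_of_map_zero (hconv : ConvexOn ℝ (Ici 0) W) (h0 : W 0 = 0)
    {lam s : ℝ} (hlam : 0 < lam) (hW : 0 ≤ W lam) (hls : lam ≤ s) :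
    W lam ≤ W (s + lam) - W lam :=
  calc W lam = W lam / lam * lam := (div_mul_cancel₀ _ hlam.ne').symm
    _ ≤ W lam / lam * s := by gcongr
    _ ≤ W (s + lam) - W lam := hconv.div_mul_le_sub_of_map_zero h0 hlam (hlam.trans_le hls)

lemma ConvexOn.monotoneOn_of_map_zero (hconv : ConvexOn ℝ (Ici 0) W) (h0 : W 0 = 0)
    (hnn : ∀ t, 0 ≤ t → 0 ≤ W t) : MonotoneOn W (Ici 0) := by
  intro u hu v _ huv
  rcases (mem_Ici.1 hu).eq_or_lt with rfl | hu
  · rw [h0]; exact hnn v (by simpa using huv)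
  rcases huv.eq_or_lt with rfl | huv
  · exact le_rfl
  have := hconv.div_mul_le_sub_of_map_zero h0 hu (sub_pos.2 huv)
  rw [sub_add_cancel] at this
  linarith [mul_nonneg (div_nonneg (hnn u hu.le) hu.le) (sub_nonneg.2 huv.le)]

lemma ConvexOn.one_div_sqrt_two_mul_sub_le_mul_inv_sqrt (hconv : ConvexOn ℝ (Ici 0) W)
    (h0 : W 0 = 0) {lam s : ℝ} (hlam : 0 < lam) (hW : 0 < W lam) (hs : 0 < s) :
    1 / √(2 * (W (s + lam) - W lam)) ≤ √lam / √(W lam) * (√s)⁻¹ := by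
  have hslope := hconv.div_mul_le_sub_of_map_zero h0 hlam hs
  have hpos : 0 < W lam / lam * s := by positivity
  calc 1 / √(2 * (W (s + lam) - W lam)) ≤ 1 / √(W lam / lam * s) :=
        one_div_le_one_div_of_le (Real.sqrt_pos.2 hpos) (Real.sqrt_le_sqrt (by linarith))
    _ = √lam / √(W lam) * (√s)⁻¹ := by
        rw [Real.sqrt_mul' _ hs.le, Real.sqrt_div' _ hlam.le]
        have := Real.sqrt_pos.2 hlam
        have := Real.sqrt_pos.2 hs
        field_simp

lemma ConvexOn.one_div_sqrt_two_mul_sub_le_one_div_sqrt (hconv : ConvexOn ℝ (Ici 0) W)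
    (h0 : W 0 = 0) {lam s : ℝ} (hlam : 0 < lam) (hW : 0 ≤ W lam) (hls : lam ≤ s)
    (hWs : 0 < W (s + lam)) : 1 / √(2 * (W (s + lam) - W lam)) ≤ 1 / √(W (s + lam)) :=
  one_div_le_one_div_of_le (Real.sqrt_pos.2 hWs) <| Real.sqrt_le_sqrt <| by
    linarith [hconv.map_le_sub_of_map_zero h0 hlam hW hls]

lemma ConvexOn.integral_one_div_sqrt_two_mul_sub_le (hconv : ConvexOn ℝ (Ici 0) W)
    (h0 : W 0 = 0) (hpos : ∀ t, 0 < t → 0 < W t) {lam : ℝ} (hlam : 0 < lam)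
    (hint : IntegrableOn (fun u => 1 / √(W u)) (Ioi (2 * lam))) :
    ∫ s in Ioi 0, 1 / √(2 * (W (s + lam) - W lam)) ≤
      2 * (lam / √(W lam)) + ∫ u in Ioi (2 * lam), 1 / √(W u) := by
  have hWlam := hpos lam hlam
  rw [← Ioc_union_Ioi_eq_Ioi hlam.le]
  calc _ ≤ (∫ s in Ioc 0 lam, √lam / √(W lam) * (√s)⁻¹) + ∫ s in Ioi lam, 1 / √(W (s + lam)) :=
        setIntegral_union_le_add Ioc_disjoint_Ioi_same measurableSet_Ioc measurableSet_Ioi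
          (fun _ _ => by positivity) ((integrableOn_Ioc_inv_sqrt lam).const_mul _)
          (integrableOn_Ioi_comp_add_right_iff.2 (by rwa [← two_mul]))
          (fun s hs => hconv.one_div_sqrt_two_mul_sub_le_mul_inv_sqrt h0 hlam hWlam hs.1)
          (fun s hs => hconv.one_div_sqrt_two_mul_sub_le_one_div_sqrt h0 hlam hWlam.le
            (le_of_lt hs) (hpos _ (by linarith [mem_Ioi.1 hs])))
    _ = 2 * (lam / √(W lam)) + ∫ u in Ioi (2 * lam), 1 / √(W u) := by
        rw [integral_const_mul, integral_Ioc_inv_sqrt hlam.le,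
          setIntegral_Ioi_comp_add_right (fun u => 1 / √(W u)),
          ← two_mul]
        have := Real.mul_self_sqrt hlam.le
        field_simp
        linarith

lemma MonotoneOn.div_sqrt_le_two_mul_setIntegral_Ioi (hmono : MonotoneOn W (Ici 0))
    (hpos : ∀ t, 0 < t → 0 < W t) {lam : ℝ} (hlam : 0 < lam)
    (hint : IntegrableOn (fun u => 1 / √(W u)) (Ioi (lam / 2))) :
    lam / √(W lam) ≤ 2 * ∫ u in Ioi (lam / 2), 1 / √(W u) := by
  have hanti : AntitoneOn (fun u => 1 / √(W u)) (Ioc (lam / 2) lam) := by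
    intro u hu v hv huv
    have hu0 : 0 < u := by linarith [hu.1]
    have hv0 : 0 < v := by linarith [hv.1]
    exact one_div_le_one_div_of_le (Real.sqrt_pos.2 (hpos u hu0))
      (Real.sqrt_le_sqrt (hmono hu0.le hv0.le huv))
  have := hanti.sub_mul_le_setIntegral_Ioi (by linarith) (fun _ _ => by positivity) hint
  calc lam / √(W lam) = 2 * ((lam - lam / 2) * (1 / √(W lam))) := by ring
    _ ≤ 2 * ∫ u in Ioi (lam / 2), 1 / √(W u) := by linarith

end ConvexFromZero

theorem blowup_length_tendsto_zero_general
    (W : ℝ → ℝ) (hWnn : ∀ t, 0 ≤ W t)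
    (hWconv : ConvexOn ℝ Set.univ W) (hWvan : ∀ t, W t = 0 ↔ t = 0)
    (hWint : IntegrableOn (fun u => 1 / Real.sqrt (W u)) {u : ℝ | 1 < u}) :
    Tendsto (fun lam => ∫ s in Ioi (0:ℝ), 1 / Real.sqrt (2 * (W (s + lam) - W lam)))
      atTop (nhds 0) := by
  have hW0 : W 0 = 0 := (hWvan 0).2 rfl
  have hWpos : ∀ t, 0 < t → 0 < W t :=
    fun t ht => (hWnn t).lt_of_ne' fun h => ht.ne' ((hWvan t).1 h)
  have hconv : ConvexOn ℝ (Ici 0) W := hWconv.subset (subset_univ _) (convex_Ici 0)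
  have hmono : MonotoneOn W (Ici 0) := hconv.monotoneOn_of_map_zero hW0 fun t _ => hWnn t
  have htail (a : ℝ) (ha : 1 ≤ a) : IntegrableOn (fun u => 1 / √(W u)) (Ioi a) :=
    hWint.mono_set (Ioi_subset_Ioi ha)
  have hbound : ∀ᶠ lam in atTop, ∫ s in Ioi 0, 1 / √(2 * (W (s + lam) - W lam)) ≤
      4 * (∫ u in Ioi (lam / 2), 1 / √(W u)) + ∫ u in Ioi (2 * lam), 1 / √(W u) := by
    filter_upwards [eventually_ge_atTop 2] with lam hlam
    calc _ ≤ 2 * (lam / √(W lam)) + ∫ u in Ioi (2 * lam), 1 / √(W u) :=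
          hconv.integral_one_div_sqrt_two_mul_sub_le hW0 hWpos (by linarith) (htail _ (by linarith))
      _ ≤ 2 * (2 * ∫ u in Ioi (lam / 2), 1 / √(W u)) + ∫ u in Ioi (2 * lam), 1 / √(W u) := by
          gcongr
          exact hmono.div_sqrt_le_two_mul_setIntegral_Ioi hWpos (by linarith)
            (htail _ (by linarith))
      _ = _ := by ring
  have hupper : Tendsto (fun lam : ℝ => 4 * (∫ u in Ioi (lam / 2), 1 / √(W u)) +
      ∫ u in Ioi (2 * lam), 1 / √(W u)) atTop (nhds 0) := by
    simpa using
      ((tendsto_integral_Ioi_zero (tendsto_id.atTop_div_const two_pos)).const_mul (4 : ℝ)).add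
        (tendsto_integral_Ioi_zero (tendsto_id.const_mul_atTop two_pos))
  exact tendsto_of_tendsto_of_tendsto_of_le_of_le' tendsto_const_nhds hupper
    (.of_forall fun _ => integral_nonneg fun _ => by positivity) hbound

theorem blowup_length_tendsto_zero
    (W : ℝ → ℝ) (hW : ContDiff ℝ 2 W) (hWnn : ∀ t, 0 ≤ W t)
    (hWconv : ConvexOn ℝ Set.univ W) (hWvan : ∀ t, W t = 0 ↔ t = 0)
    (hWint : IntegrableOn (fun u => 1 / Real.sqrt (W u)) {u : ℝ | 1 < u}) :
    Tendsto (fun lam => ∫ s in Ioi (0:ℝ), 1 / Real.sqrt (2 * (W (s + lam) - W lam)))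
      atTop (nhds 0) :=
  blowup_length_tendsto_zero_general W hWnn hWconv hWvan hWint
end

section
/- Under the hypotheses on W, lim_{λ→0⁺} l(λ) = ∞, where l(λ) = ∫₀^∞ ds/√(2(W(s+λ) − W(λ))). In particular ∫₀^∞ ds/√(2 W(s)) = ∞. -/
/-!
Convexity and `W 0 = 0` give `W (s + λ) - W λ ≥ W' λ * s` with `W' λ > 0`, so near `s = 0` the
integrand of `l λ` is `O(s^(-1/2))`, while for large `s` it is dominated by `1 / √W`; hence
`l λ` is a convergent integral (not the junk value `0`). Since `W` is `C²` with `W 0 = W' 0 = 0`,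
`W u ≤ u W' u ≤ C u²` near `0`, so for `λ ≤ s ≤ 1` the integrand is at least `c / s` and
`l λ ≥ c log (1 / λ)`. The same bound with `λ = 0` rules out integrability of `1 / √(2 W)`.
-/

open MeasureTheory Set Filter

open Real Topology

section ConvexFromOrigin

variable {f : ℝ → ℝ}

theorem ConvexOn.mul_le_mul_of_map_zero (hf : ConvexOn ℝ univ f) (h0 : f 0 = 0) {x y : ℝ}
    (hx : 0 < x) (hxy : x ≤ y) : y * f x ≤ x * f y := by
  have hy : 0 < y := hx.trans_le hxy
  have h := hf.slope_mono (mem_univ 0) ⟨mem_univ x, hx.ne'⟩ ⟨mem_univ y, hy.ne'⟩ hxy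
  simp only [slope_def_field, h0, sub_zero] at h
  rwa [div_le_div_iff₀ hx hy, mul_comm, mul_comm (f y)] at h

theorem ConvexOn.strictMonoOn_Ici (hf : ConvexOn ℝ univ f) (h0 : f 0 = 0)
    (hpos : ∀ x, 0 < x → 0 < f x) : StrictMonoOn f (Ici 0) := by
  intro x hx y hy hxy
  rcases (mem_Ici.mp hx).eq_or_lt with rfl | hx
  · rw [h0]; exact hpos y hxy
  · have hy : 0 < y := hx.trans hxy
    nlinarith [hf.mul_le_mul_of_map_zero h0 hx hxy.le, hpos y hy]

theorem ConvexOn.deriv_pos (hf : ConvexOn ℝ univ f) {x y : ℝ} (hd : DifferentiableAt ℝ f y)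
    (hxy : x < y) (hfxy : f x < f y) : 0 < deriv f y := by
  refine lt_of_lt_of_le ?_ (hf.slope_le_deriv (mem_univ x) (mem_univ y) hxy hd)
  rw [slope_def_field]
  exact div_pos (sub_pos.mpr hfxy) (sub_pos.mpr hxy)

theorem ConvexOn.deriv_mul_le_sub (hf : ConvexOn ℝ univ f) {x s : ℝ}
    (hd : DifferentiableAt ℝ f x) (hs : 0 < s) : deriv f x * s ≤ f (s + x) - f x := by
  have h := hf.deriv_le_slope (mem_univ x) (mem_univ (s + x)) (by linarith) hd
  rwa [slope_def_field, add_sub_cancel_right, le_div_iff₀ hs] at h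

theorem ConvexOn.exists_le_mul_sq (hf : ConvexOn ℝ univ f) (hf2 : ContDiff ℝ 2 f)
    (h0 : f 0 = 0) (hd0 : deriv f 0 = 0) (a : ℝ) :
    ∃ C, 0 < C ∧ ∀ u ∈ Icc 0 a, f u ≤ C * u ^ 2 := by
  obtain ⟨K, hK⟩ := (hf2.deriv' (n := 1)).locallyLipschitz.locallyLipschitzOn
    |>.exists_lipschitzOnWith_of_compact isCompact_Icc (s := Icc 0 a)
  refine ⟨K + 1, by positivity, fun u hu => ?_⟩
  rcases hu.1.eq_or_lt with rfl | hu0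
  · simp [h0]
  have hslope := hf.slope_le_deriv (mem_univ 0) (mem_univ u) hu0
    (hf2.differentiable (by norm_num) u)
  have hlip : deriv f u ≤ K * u := by
    have := hK.dist_le_mul u hu 0 ⟨le_rfl, hu0.le.trans hu.2⟩
    rw [hd0, Real.dist_eq, Real.dist_eq, sub_zero, sub_zero, abs_of_pos hu0] at this
    exact (le_abs_self _).trans this
  rw [slope_def_field, h0, sub_zero, sub_zero, div_le_iff₀ hu0] at hslope
  nlinarith

end ConvexFromOrigin

theorem inv_sqrt_mul_inv_le_one_div_sqrt {y s K : ℝ} (hy : 0 < y) (hs : 0 ≤ s)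
    (h : y ≤ K * s ^ 2) : (√K)⁻¹ * s⁻¹ ≤ 1 / √y := by
  calc (√K)⁻¹ * s⁻¹ = 1 / √(K * s ^ 2) := by
        rw [sqrt_mul' _ (sq_nonneg s), sqrt_sq hs, one_div, mul_inv]
    _ ≤ 1 / √y := one_div_le_one_div_of_le (sqrt_pos.mpr hy) (sqrt_le_sqrt h)

theorem tendsto_mul_neg_log_nhdsGT_zero {c : ℝ} (hc : 0 < c) :
    Tendsto (fun x => c * -log x) (𝓝[>] 0) atTop :=
  (tendsto_neg_atBot_atTop.comp tendsto_log_nhdsGT_zero).const_mul_atTop hc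

theorem mul_neg_log_le_setIntegral_Ioi {g : ℝ → ℝ} {c lam : ℝ} (hlam : 0 < lam)
    (hlam1 : lam ≤ 1) (hg : IntegrableOn g (Ioi 0)) (hg0 : ∀ s ∈ Ioi 0, 0 ≤ g s)
    (hgc : ∀ s ∈ Ioc lam 1, c * s⁻¹ ≤ g s) : c * -log lam ≤ ∫ s in Ioi 0, g s := by
  have hinv : IntegrableOn (fun s => c * s⁻¹) (Ioc lam 1) := by
    refine (ContinuousOn.integrableOn_Icc ?_).mono_set Ioc_subset_Icc_self
    exact continuousOn_const.mul (continuousOn_inv₀.mono fun s hs => (hlam.trans_le hs.1).ne')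
  calc c * -log lam = ∫ s in Ioc lam 1, c * s⁻¹ := by
        rw [integral_const_mul, ← intervalIntegral.integral_of_le hlam1,
          integral_inv_of_pos hlam one_pos, one_div, log_inv]
    _ ≤ ∫ s in Ioc lam 1, g s :=
        setIntegral_mono_on hinv (hg.mono_set fun s hs => hlam.trans hs.1) measurableSet_Ioc hgc
    _ ≤ ∫ s in Ioi 0, g s :=
        setIntegral_mono_set hg (ae_restrict_of_forall_mem measurableSet_Ioi hg0)
          (Eventually.of_forall fun s hs => hlam.trans hs.1)

theorem not_integrableOn_Ioi_of_mul_inv_le {g : ℝ → ℝ} {c : ℝ} (hc : 0 < c)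
    (hg0 : ∀ s ∈ Ioi 0, 0 ≤ g s) (hgc : ∀ s ∈ Ioc 0 1, c * s⁻¹ ≤ g s) :
    ¬ IntegrableOn g (Ioi 0) := by
  intro hg
  have hlow : ∀ᶠ lam in 𝓝[>] 0, c * -log lam ≤ ∫ s in Ioi 0, g s := by
    filter_upwards [Ioo_mem_nhdsGT one_pos] with lam hlam
    exact mul_neg_log_le_setIntegral_Ioi hlam.1 hlam.2.le hg hg0
      fun s hs => hgc s ⟨hlam.1.trans hs.1, hs.2⟩
  obtain ⟨lam, hle, hgt⟩ :=
    (hlow.and ((tendsto_mul_neg_log_nhdsGT_zero hc).eventually_gt_atTop _)).exists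
  exact hgt.not_ge hle

section Potential

variable {W : ℝ → ℝ}

theorem integrableOn_Ioc_one_div_sqrt_sub (hconv : ConvexOn ℝ univ W) (h0 : W 0 = 0)
    (hpos : ∀ x, 0 < x → 0 < W x) (hcont : Continuous W) {lam : ℝ}
    (hd : DifferentiableAt ℝ W lam) (hlam : 0 < lam) (b : ℝ) :
    IntegrableOn (fun s => 1 / √(2 * (W (s + lam) - W lam))) (Ioc 0 b) := by
  have hd0 : 0 < 2 * deriv W lam := by
    have := hconv.deriv_pos hd hlam (by rw [h0]; exact hpos lam hlam)
    positivity
  have hbound : IntegrableOn (fun s : ℝ => (√(2 * deriv W lam))⁻¹ * s ^ (-(1 / 2 : ℝ)))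
      (Ioc 0 b) := by
    rcases le_total b 0 with hb | hb
    · simp [Ioc_eq_empty_of_le hb]
    refine Integrable.const_mul ?_ _
    rw [← IntegrableOn, ← intervalIntegrable_iff_integrableOn_Ioc_of_le hb]
    exact intervalIntegral.intervalIntegrable_rpow' (by norm_num)
  refine hbound.mono' (Measurable.aestronglyMeasurable (by fun_prop))
    (ae_restrict_of_forall_mem measurableSet_Ioc fun s hs => ?_)
  have hsqrt : √(2 * deriv W lam) * √s ≤ √(2 * (W (s + lam) - W lam)) := by
    rw [← sqrt_mul hd0.le]
    exact sqrt_le_sqrt (by nlinarith [hconv.deriv_mul_le_sub hd hs.1])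
  rw [norm_of_nonneg (by positivity), rpow_neg hs.1.le, ← sqrt_eq_rpow, ← mul_inv, ← one_div]
  exact one_div_le_one_div_of_le (mul_pos (sqrt_pos.2 hd0) (sqrt_pos.2 hs.1)) hsqrt

theorem integrableOn_Ioi_two_one_div_sqrt_sub (hconv : ConvexOn ℝ univ W) (h0 : W 0 = 0)
    (hpos : ∀ x, 0 < x → 0 < W x) (hcont : Continuous W)
    (hint : IntegrableOn (fun u => 1 / √(W u)) (Ioi 1)) {lam : ℝ} (hlam : 0 < lam)
    (hlam1 : lam ≤ 1) :
    IntegrableOn (fun s => 1 / √(2 * (W (s + lam) - W lam))) (Ioi 2) := by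
  have hmono := hconv.strictMonoOn_Ici h0 hpos
  refine (hint.mono_set (Ioi_subset_Ioi one_le_two)).mono'
    (Measurable.aestronglyMeasurable (by fun_prop))
    (ae_restrict_of_forall_mem measurableSet_Ioi fun s (hs : 2 < s) => ?_)
  have hgrowth : s * W 1 ≤ W s := by
    simpa using hconv.mul_le_mul_of_map_zero h0 one_pos (by linarith : (1 : ℝ) ≤ s)
  have hWlam : W lam ≤ W 1 := hmono.monotoneOn hlam.le (mem_Ici.2 zero_le_one) hlam1
  have hWs : W s ≤ W (s + lam) :=
    hmono.monotoneOn (mem_Ici.2 (by linarith)) (mem_Ici.2 (by linarith)) (by linarith)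
  have hW1 := hpos 1 one_pos
  rw [norm_of_nonneg (by positivity)]
  exact one_div_le_one_div_of_le (sqrt_pos.2 (by nlinarith)) (sqrt_le_sqrt (by nlinarith))

theorem integrableOn_Ioi_one_div_sqrt_sub (hconv : ConvexOn ℝ univ W) (h0 : W 0 = 0)
    (hpos : ∀ x, 0 < x → 0 < W x) (hd : Differentiable ℝ W)
    (hint : IntegrableOn (fun u => 1 / √(W u)) (Ioi 1)) {lam : ℝ} (hlam : 0 < lam)
    (hlam1 : lam ≤ 1) :
    IntegrableOn (fun s => 1 / √(2 * (W (s + lam) - W lam))) (Ioi 0) := by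
  rw [← Ioc_union_Ioi_eq_Ioi zero_le_two]
  exact (integrableOn_Ioc_one_div_sqrt_sub hconv h0 hpos hd.continuous (hd lam) hlam 2).union
    (integrableOn_Ioi_two_one_div_sqrt_sub hconv h0 hpos hd.continuous hint hlam hlam1)

theorem inv_sqrt_mul_inv_le_one_div_sqrt_sub (hconv : ConvexOn ℝ univ W) (h0 : W 0 = 0)
    (hpos : ∀ x, 0 < x → 0 < W x) {C : ℝ} (hC : ∀ u ∈ Icc 0 2, W u ≤ C * u ^ 2) {lam s : ℝ}
    (hlam : 0 ≤ lam) (hs : 0 < s) (hlams : lam ≤ s) (hs1 : s ≤ 1) :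
    (√(8 * C))⁻¹ * s⁻¹ ≤ 1 / √(2 * (W (s + lam) - W lam)) := by
  have hmono := hconv.strictMonoOn_Ici h0 hpos
  have hincr : W lam < W (s + lam) := hmono hlam (mem_Ici.2 (by linarith)) (by linarith)
  have hWlam : 0 ≤ W lam := by simpa [h0] using hmono.monotoneOn (mem_Ici.2 le_rfl) hlam hlam
  have hsq : (s + lam) ^ 2 ≤ 4 * s ^ 2 := by nlinarith
  refine inv_sqrt_mul_inv_le_one_div_sqrt (by linarith) hs.le ?_
  have hC0 : 0 ≤ C := by nlinarith [hC 1 ⟨zero_le_one, one_le_two⟩, hpos 1 one_pos]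
  nlinarith [hC (s + lam) ⟨by linarith, by linarith⟩, mul_le_mul_of_nonneg_left hsq hC0]

end Potential

theorem blowup_length_tendsto_top
    (W : ℝ → ℝ) (hW : ContDiff ℝ 2 W) (hWnn : ∀ t, 0 ≤ W t)
    (hWconv : ConvexOn ℝ Set.univ W) (hWvan : ∀ t, W t = 0 ↔ t = 0)
    (hWint : IntegrableOn (fun u => 1 / Real.sqrt (W u)) {u : ℝ | 1 < u}) :
    Tendsto (fun lam => ∫ s in Ioi (0:ℝ), 1 / Real.sqrt (2 * (W (s + lam) - W lam)))
      (nhdsWithin 0 (Ioi 0)) atTop ∧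
    ¬ IntegrableOn (fun s => 1 / Real.sqrt (2 * W s)) (Ioi (0:ℝ)) := by
  have hW0 : W 0 = 0 := (hWvan 0).2 rfl
  have hWpos : ∀ x, 0 < x → 0 < W x := fun x hx =>
    (hWnn x).lt_of_ne' fun h => hx.ne' ((hWvan x).1 h)
  have hd : Differentiable ℝ W := hW.differentiable (by norm_num)
  have hd0 : deriv W 0 = 0 :=
    IsLocalMin.deriv_eq_zero (.of_forall fun t => by rw [hW0]; exact hWnn t)
  obtain ⟨C, hC, hWC⟩ := hWconv.exists_le_mul_sq hW hW0 hd0 2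
  have hc : 0 < (√(8 * C))⁻¹ := by positivity
  constructor
  · refine tendsto_atTop_mono' _ ?_ (tendsto_mul_neg_log_nhdsGT_zero hc)
    filter_upwards [Ioo_mem_nhdsGT one_pos] with lam ⟨hlam, hlam1⟩
    exact mul_neg_log_le_setIntegral_Ioi hlam hlam1.le
      (integrableOn_Ioi_one_div_sqrt_sub hWconv hW0 hWpos hd hWint hlam hlam1.le)
      (fun s _ => by positivity) fun s hs =>
        inv_sqrt_mul_inv_le_one_div_sqrt_sub hWconv hW0 hWpos hWC hlam.le
          (hlam.trans hs.1) hs.1.le hs.2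
  · refine not_integrableOn_Ioi_of_mul_inv_le hc (fun s _ => by positivity) fun s hs => ?_
    simpa [hW0] using
      inv_sqrt_mul_inv_le_one_div_sqrt_sub hWconv hW0 hWpos hWC le_rfl hs.1 hs.1.le hs.2
end

section
/- For every h > 0, the maximal solution β of β'' = W'(β) with β(0) = 0 and β'(0) = √(2h) is strictly increasing, defined exactly on (−l⁻(h), l⁺(h)) with l⁺(h) = ∫₀^∞ ds/√(2(W(s)+h)) < ∞ and l⁻(h) = ∫_{−∞}^0 ds/√(2(W(s)+h)) < ∞, and maps its domain onto ℝ. -/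
/-!
Conservation of energy turns `β'' = W'(β)` with `β'(0)² = 2h` into the separable equation
`β' = √(2(W(β) + h))`, so `β` is the inverse of the primitive `F y = ∫₀^y ds / √(2(W(s) + h))`.
The integrand is continuous, positive and bounded by `1 / √W` away from `[-1, 1]`, hence integrable
on `ℝ`: `F` is a strictly increasing bijection from `ℝ` onto `(-l⁻(h), l⁺(h))`, and its inverse
blows up at both ends of that interval.
-/

open MeasureTheory Set Filter Topology Function

theorem integrable_of_integrableOn_one_lt_abs {E : Type*} [NormedAddCommGroup E] {f : ℝ → E}
    (hf : LocallyIntegrable f) (h : IntegrableOn f {u : ℝ | 1 < |u|}) : Integrable f := by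
  rw [← integrableOn_univ]
  refine ((hf.integrableOn_isCompact (isCompact_Icc (a := -1) (b := 1))).union h).mono_set
    fun u _ => ?_
  by_cases hu : |u| ≤ 1
  · exact Or.inl (abs_le.mp hu)
  · exact Or.inr (not_le.mp hu)

theorem StrictMono.range_eq_Ioo_of_tendsto {α β : Type*} [LinearOrder α] [TopologicalSpace α]
    [PreconnectedSpace α] [Nonempty α] [NoMaxOrder α] [NoMinOrder α] [LinearOrder β]
    [TopologicalSpace β] [OrderClosedTopology β] {F : α → β} {a b : β} (hF : StrictMono F)
    (hFc : Continuous F) (hbot : Tendsto F atBot (𝓝 a)) (htop : Tendsto F atTop (𝓝 b)) : range F = Ioo a b := by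
  refine Subset.antisymm ?_ fun x hx => ?_
  · rintro _ ⟨y, rfl⟩
    obtain ⟨y₁, hy₁⟩ := exists_lt y
    obtain ⟨y₂, hy₂⟩ := exists_gt y
    exact ⟨(hF.monotone.le_of_tendsto hbot y₁).trans_lt (hF hy₁),
      (hF hy₂).trans_le (hF.monotone.ge_of_tendsto htop y₂)⟩
  · exact mem_range_of_exists_le_of_exists_ge hFc
      ((hbot.eventually (eventually_lt_nhds hx.1)).exists.imp fun _ => le_of_lt)
      ((htop.eventually (eventually_gt_nhds hx.2)).exists.imp fun _ => le_of_lt)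

section Primitive

variable {g : ℝ → ℝ}

theorem strictMono_primitive_of_pos (hg : Continuous g) (hpos : ∀ x, 0 < g x) :
    StrictMono fun y => ∫ s in (0 : ℝ)..y, g s :=
  strictMono_of_deriv_pos fun y => (Continuous.deriv_integral g hg 0 y).symm ▸ hpos y

theorem tendsto_primitive_atBot (hg : IntegrableOn g (Iio 0)) :
    Tendsto (fun y => ∫ s in (0 : ℝ)..y, g s) atBot (𝓝 (-∫ s in Iio 0, g s)) := by
  rw [← setIntegral_congr_set (Iio_ae_eq_Iic (a := (0 : ℝ))).symm]
  refine ((intervalIntegral_tendsto_integral_Iic 0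
    (hg.congr_set_ae Iio_ae_eq_Iic.symm) tendsto_id).neg).congr fun y => ?_
  rw [intervalIntegral.integral_symm, neg_neg, id]

theorem range_primitive_of_pos (hg : Continuous g) (hpos : ∀ x, 0 < g x) (hgi : Integrable g) :
    range (fun y => ∫ s in (0 : ℝ)..y, g s) = Ioo (-∫ s in Iio 0, g s) (∫ s in Ioi 0, g s) :=
  (strictMono_primitive_of_pos hg hpos).range_eq_Ioo_of_tendsto
    (intervalIntegral.continuous_primitive (fun _ _ => hg.intervalIntegrable _ _) 0)
    (tendsto_primitive_atBot hgi.integrableOn)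
    (intervalIntegral_tendsto_integral_Ioi 0 hgi.integrableOn tendsto_id)

end Primitive

section Inverse

variable {F : ℝ → ℝ} {a b : ℝ}

theorem StrictMono.strictMonoOn_invFun (hF : StrictMono F) :
    StrictMonoOn (invFun F) (range F) := by
  intro x hx y hy hxy
  rw [← hF.lt_iff_lt, invFun_eq hx, invFun_eq hy]
  exact hxy

theorem StrictMono.tendsto_invFun_nhdsLT (hF : StrictMono F) (hrange : range F = Ioo a b) :
    Tendsto (invFun F) (𝓝[<] b) atTop := by
  refine Filter.tendsto_atTop.2 fun M => ?_
  have hM : F M ∈ Ioo a b := hrange ▸ mem_range_self M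
  filter_upwards [Ioo_mem_nhdsLT hM.2] with x hx
  have hxF : x ∈ range F := hrange ▸ ⟨hM.1.trans hx.1, hx.2⟩
  rw [← hF.le_iff_le, invFun_eq hxF]
  exact hx.1.le

theorem StrictMono.tendsto_invFun_nhdsGT (hF : StrictMono F) (hrange : range F = Ioo a b) :
    Tendsto (invFun F) (𝓝[>] a) atBot := by
  refine Filter.tendsto_atBot.2 fun M => ?_
  have hM : F M ∈ Ioo a b := hrange ▸ mem_range_self M
  filter_upwards [Ioo_mem_nhdsGT hM.1] with x hx
  have hxF : x ∈ range F := hrange ▸ ⟨hx.1, hx.2.trans hM.2⟩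
  rw [← hF.le_iff_le, invFun_eq hxF]
  exact hx.2.le

theorem hasStrictDerivAt_invFun {F' : ℝ → ℝ} (hF : Injective F)
    (hF' : ∀ y, HasStrictDerivAt F (F' y) y) (hne : ∀ y, F' y ≠ 0) {x : ℝ} (hx : x ∈ range F) :
    HasStrictDerivAt (invFun F) (F' (invFun F x))⁻¹ x := by
  have := (hF' (invFun F x)).to_local_left_inverse (hne _)
    (Eventually.of_forall (leftInverse_invFun hF))
  rwa [invFun_eq hx] at this

end Inverse

section Energy

variable {W : ℝ → ℝ} {h : ℝ}

theorem integrable_one_div_sqrt_two_mul_add (hWc : Continuous W) (hWnn : ∀ t, 0 ≤ W t)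
    (hWvan : ∀ t, W t = 0 → t = 0) (hh : 0 < h)
    (hWint : IntegrableOn (fun u => 1 / √(W u)) {u : ℝ | 1 < |u|}) :
    Integrable fun s => 1 / √(2 * (W s + h)) := by
  have hpos : ∀ s, 0 < 2 * (W s + h) := fun s => by linarith [hWnn s]
  have hcont : Continuous fun s => 1 / √(2 * (W s + h)) :=
    continuous_const.div (by fun_prop) fun s => (Real.sqrt_pos.2 (hpos s)).ne'
  refine integrable_of_integrableOn_one_lt_abs hcont.locallyIntegrable
    (hWint.mono' hcont.aestronglyMeasurable.restrict (ae_restrict_of_forall_mem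
      (isOpen_lt continuous_const continuous_abs).measurableSet fun u hu => ?_))
  have hu : 0 < W u := (hWnn u).lt_of_ne' fun h0 => by
    norm_num [hWvan u h0] at hu
  rw [Real.norm_of_nonneg (one_div_pos.2 (Real.sqrt_pos.2 (hpos u))).le]
  exact one_div_le_one_div_of_le (Real.sqrt_pos.2 hu) (Real.sqrt_le_sqrt (by linarith))

theorem hasDerivAt_sqrt_two_mul_add_comp {β : ℝ → ℝ} {x : ℝ} (hW : DifferentiableAt ℝ W (β x))
    (hpos : 0 < W (β x) + h) (hβ : HasDerivAt β √(2 * (W (β x) + h)) x) :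
    HasDerivAt (fun y => √(2 * (W (β y) + h))) (deriv W (β x)) x := by
  have hsqrt := ((hW.hasDerivAt.add_const h).const_mul 2).sqrt (by positivity)
  refine (hsqrt.comp x hβ).congr_deriv ?_
  field_simp [(Real.sqrt_pos.2 (by positivity : 0 < 2 * (W (β x) + h))).ne']

end Energy

theorem maximal_solution_beta_general
    (W : ℝ → ℝ) (hW : ContDiff ℝ 2 W) (hWnn : ∀ t, 0 ≤ W t)
    (hWvan : ∀ t, W t = 0 ↔ t = 0)
    (hWint : IntegrableOn (fun u => 1 / Real.sqrt (W u)) {u : ℝ | 1 < |u|})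
    (h : ℝ) (hh : 0 < h) :
    ∃ (lm lp : ℝ) (β β' : ℝ → ℝ),
      IntegrableOn (fun s => 1 / Real.sqrt (2 * (W s + h))) (Ioi (0:ℝ)) ∧
      IntegrableOn (fun s => 1 / Real.sqrt (2 * (W s + h))) (Iio (0:ℝ)) ∧
      lp = (∫ s in Ioi (0:ℝ), 1 / Real.sqrt (2 * (W s + h))) ∧
      lm = (∫ s in Iio (0:ℝ), 1 / Real.sqrt (2 * (W s + h))) ∧
      0 < lm ∧ 0 < lp ∧
      (∀ x ∈ Ioo (-lm) lp, HasDerivAt β (β' x) x ∧ HasDerivAt β' (deriv W (β x)) x) ∧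
      β 0 = 0 ∧ β' 0 = Real.sqrt (2 * h) ∧
      StrictMonoOn β (Ioo (-lm) lp) ∧
      β '' (Ioo (-lm) lp) = univ ∧
      Tendsto β (nhdsWithin lp (Iio lp)) atTop ∧
      Tendsto β (nhdsWithin (-lm) (Ioi (-lm))) atBot := by
  set g : ℝ → ℝ := fun s => 1 / √(2 * (W s + h))
  have hWh : ∀ s, 0 < 2 * (W s + h) := fun s => by linarith [hWnn s]
  have hg : ∀ s, 0 < g s := fun s => one_div_pos.2 (Real.sqrt_pos.2 (hWh s))
  have hgc : Continuous g :=
    continuous_const.div (by fun_prop) fun s => (Real.sqrt_pos.2 (hWh s)).ne'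
  have hgi : Integrable g :=
    integrable_one_div_sqrt_two_mul_add hW.continuous hWnn (fun t => (hWvan t).1) hh hWint
  set lp := ∫ s in Ioi 0, g s
  set lm := ∫ s in Iio 0, g s
  set F : ℝ → ℝ := fun y => ∫ s in (0 : ℝ)..y, g s
  have hF : StrictMono F := strictMono_primitive_of_pos hgc hg
  have hrange : range F = Ioo (-lm) lp := range_primitive_of_pos hgc hg hgi
  have hF0 : F 0 = 0 := intervalIntegral.integral_same
  have hβ0 : invFun F 0 = 0 := by simpa [hF0] using leftInverse_invFun hF.injective 0
  obtain ⟨hlm, hlp⟩ : (0 : ℝ) ∈ Ioo (-lm) lp := hrange ▸ hF0 ▸ mem_range_self 0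
  have hβ : ∀ x ∈ Ioo (-lm) lp, HasDerivAt (invFun F) √(2 * (W (invFun F x) + h)) x :=
    fun x hx => by
      simpa [g] using (hasStrictDerivAt_invFun hF.injective (hgc.integral_hasStrictDerivAt 0)
        (fun y => (hg y).ne') (hrange ▸ hx)).hasDerivAt
  refine ⟨lm, lp, invFun F, fun x => √(2 * (W (invFun F x) + h)), hgi.integrableOn,
    hgi.integrableOn, rfl, rfl, neg_neg_iff_pos.1 hlm, hlp, fun x hx => ⟨hβ x hx, ?_⟩, hβ0,
    by simp [hβ0, (hWvan 0).2], hrange ▸ hF.strictMonoOn_invFun, ?_,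
    hF.tendsto_invFun_nhdsLT hrange, hF.tendsto_invFun_nhdsGT hrange⟩
  · exact hasDerivAt_sqrt_two_mul_add_comp (hW.differentiable (by norm_num) _)
      (by linarith [hWh (invFun F x)]) (hβ x hx)
  · rw [← hrange, ← range_comp, (leftInverse_invFun hF.injective).comp_eq_id, range_id]

theorem maximal_solution_beta
    (W : ℝ → ℝ) (hW : ContDiff ℝ 2 W) (hWnn : ∀ t, 0 ≤ W t)
    (hWconv : ConvexOn ℝ Set.univ W) (hWvan : ∀ t, W t = 0 ↔ t = 0)
    (hWint : IntegrableOn (fun u => 1 / Real.sqrt (W u)) {u : ℝ | 1 < |u|})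
    (h : ℝ) (hh : 0 < h) :
    ∃ (lm lp : ℝ) (β β' : ℝ → ℝ),
      IntegrableOn (fun s => 1 / Real.sqrt (2 * (W s + h))) (Ioi (0:ℝ)) ∧
      IntegrableOn (fun s => 1 / Real.sqrt (2 * (W s + h))) (Iio (0:ℝ)) ∧
      lp = (∫ s in Ioi (0:ℝ), 1 / Real.sqrt (2 * (W s + h))) ∧
      lm = (∫ s in Iio (0:ℝ), 1 / Real.sqrt (2 * (W s + h))) ∧
      0 < lm ∧ 0 < lp ∧
      (∀ x ∈ Ioo (-lm) lp, HasDerivAt β (β' x) x ∧ HasDerivAt β' (deriv W (β x)) x) ∧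
      β 0 = 0 ∧ β' 0 = Real.sqrt (2 * h) ∧
      StrictMonoOn β (Ioo (-lm) lp) ∧
      β '' (Ioo (-lm) lp) = univ ∧
      Tendsto β (nhdsWithin lp (Iio lp)) atTop ∧
      Tendsto β (nhdsWithin (-lm) (Ioi (-lm))) atBot :=
  maximal_solution_beta_general W hW hWnn hWvan hWint h hh
end

section
/- The zero function is the only solution of u'' = W'(u) defined on all of ℝ. -/
open MeasureTheory Set Filter Topology

/-!
Convexity and `W 0 = 0` give `W t ≤ t W'(t)`, hence `(u u')' = u'² + u W'(u) ≥ u'² + W(u) ≥ 0`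
and `u u'` is nondecreasing. If `u u' > 0` somewhere, then from there on `|u|` increases to `∞`,
and energy conservation `u'² = 2 W(u) + c` eventually gives `|u'| ≥ √W(u)`. So the time `|u|`
needs to go from `a` to `b` is at most `∫_a^b dt / √W(t)`, which stays bounded, although `u`
lives for all times. Reversing time rules out `u u' < 0` as well. Thus `u u' ≡ 0`, and then
`0 = u'² + u W'(u) ≥ W(u)` forces `u ≡ 0`.
-/

lemma ConvexOn.add_deriv_mul_sub_le {f : ℝ → ℝ} (hf : ConvexOn ℝ univ f) {x : ℝ}
    (hx : DifferentiableAt ℝ f x) (y : ℝ) : f x + deriv f x * (y - x) ≤ f y := by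
  rcases lt_trichotomy y x with h | rfl | h
  · have h1 := hf.slope_le_deriv (mem_univ y) (mem_univ x) h hx
    rw [slope_def_field, div_le_iff₀ (sub_pos.2 h)] at h1
    linarith
  · simp
  · have h1 := hf.deriv_le_slope (mem_univ x) (mem_univ y) h hx
    rw [slope_def_field, le_div_iff₀ (sub_pos.2 h)] at h1
    linarith

lemma ConvexOn.tendsto_atTop_of_lt {f : ℝ → ℝ} (hf : ConvexOn ℝ univ f) {a b : ℝ}
    (hab : a < b) (hfab : f a < f b) : Tendsto f atTop atTop := by
  set k := (f b - f a) / (b - a)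
  have hk : 0 < k := div_pos (sub_pos.2 hfab) (sub_pos.2 hab)
  have hline : Tendsto (fun t => f a + k * (t - a)) atTop atTop :=
    tendsto_atTop_add_const_left _ _
      ((tendsto_atTop_add_const_right _ _ tendsto_id).const_mul_atTop hk)
  refine tendsto_atTop_mono' _ ?_ hline
  filter_upwards [eventually_ge_atTop b] with t hbt
  have := hf.secant_mono (mem_univ a) (mem_univ b) (mem_univ t) hab.ne' (by linarith) hbt
  rw [le_div_iff₀ (by linarith)] at this
  linarith

lemma ConvexOn.tendsto_atBot_of_lt {f : ℝ → ℝ} (hf : ConvexOn ℝ univ f) {a b : ℝ}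
    (hab : a < b) (hfab : f b < f a) : Tendsto f atBot atTop := by
  have hneg : ConvexOn ℝ univ (fun t => f (-t)) := by
    have := hf.comp_linearMap (-LinearMap.id : ℝ →ₗ[ℝ] ℝ)
    rwa [preimage_univ] at this
  simpa [Function.comp_def] using
    (hneg.tendsto_atTop_of_lt (neg_lt_neg hab) (by simpa using hfab)).comp tendsto_neg_atBot_atTop

lemma tendsto_atTop_of_mul_deriv_ge {u u' : ℝ → ℝ} (hu : ∀ x, HasDerivAt u (u' x) x)
    {x₁ m : ℝ} (hm : 0 < m) (hux₁ : 0 < u x₁) (hmul : ∀ x, x₁ ≤ x → m ≤ u x * u' x) :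
    Tendsto u atTop atTop ∧ ∀ᶠ x in atTop, 0 < u' x := by
  have hcont : Continuous u := continuous_iff_continuousAt.2 fun x => (hu x).continuousAt
  have hpos : ∀ x, x₁ ≤ x → 0 < u x := by
    intro x hx
    by_contra! hle
    obtain ⟨z, hz, hz0⟩ := intermediate_value_Icc' hx hcont.continuousOn ⟨hle, hux₁.le⟩
    have := hmul z hz.1
    rw [hz0, zero_mul] at this
    linarith
  have hsq : ∀ x, x₁ ≤ x → 2 * m * (x - x₁) ≤ u x ^ 2 - u x₁ ^ 2 := by
    have hd : ∀ x, HasDerivAt (fun y => u y ^ 2) (2 * (u x * u' x)) x := fun x =>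
      ((hu x).pow 2).congr_deriv (by norm_num; ring)
    refine fun x hx => (convex_Ici x₁).mul_sub_le_image_sub_of_le_deriv
      (fun y _ => (hd y).continuousAt.continuousWithinAt)
      (fun y _ => (hd y).differentiableAt.differentiableWithinAt) (fun y hy => ?_)
      x₁ self_mem_Ici x hx hx
    rw [interior_Ici] at hy
    rw [(hd y).deriv]
    linarith [hmul y hy.le]
  refine ⟨?_, eventually_atTop.2 ⟨x₁, fun x hx =>
    pos_of_mul_pos_right (hm.trans_le (hmul x hx)) (hpos x hx).le⟩⟩
  have hsq_top : Tendsto (fun x => u x ^ 2) atTop atTop := by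
    refine tendsto_atTop_mono' _ ?_
      ((tendsto_atTop_add_const_right _ (-x₁) tendsto_id).const_mul_atTop (mul_pos two_pos hm))
    filter_upwards [eventually_ge_atTop x₁] with x hx
    simp only [id, ← sub_eq_add_neg]
    linarith [hsq x hx, sq_nonneg (u x₁)]
  refine (Real.tendsto_sqrt_atTop.comp hsq_top).congr' ?_
  filter_upwards [eventually_ge_atTop x₁] with x hx
  exact Real.sqrt_sq (hpos x hx).le

lemma MeasureTheory.IntegrableOn.not_forall_one_le_comp_mul_deriv {g u u' : ℝ → ℝ}
    {a x₀ : ℝ} (hg : IntegrableOn g (Ioi a)) (hg0 : ∀ t, 0 ≤ g t)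
    (hu : ∀ x, HasDerivAt u (u' x) x)
    (hua : ∀ x, x₀ ≤ x → a < u x) (hgc : ∀ x, x₀ ≤ x → ContinuousAt g (u x)) :
    ¬ ∀ x, x₀ ≤ x → 1 ≤ g (u x) * u' x := by
  intro hge
  set G : ℝ → ℝ := fun y => ∫ t in a..y, g t
  set M := ∫ t in Ioi a, g t
  have hG_le : ∀ y, a ≤ y → G y ≤ M := fun y hy => by
    simp only [G]
    rw [intervalIntegral.integral_of_le hy]
    exact setIntegral_mono_set hg (.of_forall hg0) Ioc_subset_Ioi_self.eventuallyLE
  have hG_nonneg : ∀ y, a ≤ y → 0 ≤ G y := fun y hy =>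
    intervalIntegral.integral_nonneg hy fun t _ => hg0 t
  have hGu : ∀ x, x₀ ≤ x → HasDerivAt (fun x => G (u x)) (g (u x) * u' x) x := fun x hx =>
    (intervalIntegral.integral_hasDerivAt_right
      ((intervalIntegrable_iff_integrableOn_Ioc_of_le (hua x hx).le).2
        (hg.mono_set Ioc_subset_Ioi_self))
      (AEStronglyMeasurable.stronglyMeasurableAtFilter_of_mem hg.aestronglyMeasurable
        (Ioi_mem_nhds (hua x hx)))
      (hgc x hx)).comp x (hu x)
  have hM : 0 ≤ M := setIntegral_nonneg measurableSet_Ioi fun t _ => hg0 t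
  have hgrowth := (convex_Ici x₀).mul_sub_le_image_sub_of_le_deriv
    (fun x hx => (hGu x hx).continuousAt.continuousWithinAt)
    (fun x hx => (hGu x (le_of_lt (by simpa using hx))).differentiableAt.differentiableWithinAt)
    (fun x hx => by
      rw [interior_Ici] at hx
      rw [(hGu x hx.le).deriv]
      exact hge x hx.le)
    x₀ self_mem_Ici (x₀ + M + 1) (mem_Ici.2 (by linarith)) (by linarith)
  linarith [hG_le _ (hua (x₀ + M + 1) (by linarith)).le, hG_nonneg _ (hua x₀ le_rfl).le]

structure SolvesODE (W u u' : ℝ → ℝ) : Prop where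
  hasDerivAt : ∀ x, HasDerivAt u (u' x) x
  hasDerivAt_deriv : ∀ x, HasDerivAt u' (deriv W (u x)) x

namespace SolvesODE

variable {W u u' : ℝ → ℝ}

lemma comp_neg (hs : SolvesODE W u u') : SolvesODE W (fun x => u (-x)) (fun x => -u' (-x)) where
  hasDerivAt x := ((hs.hasDerivAt (-x)).comp x (hasDerivAt_neg x)).congr_deriv (by ring)
  hasDerivAt_deriv x :=
    ((hs.hasDerivAt_deriv (-x)).comp x (hasDerivAt_neg x)).neg.congr_deriv (by ring)

lemma neg (hs : SolvesODE W u u') : SolvesODE (fun t => W (-t)) (-u) (-u') where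
  hasDerivAt x := (hs.hasDerivAt x).neg
  hasDerivAt_deriv x := by simpa [deriv_comp_neg] using (hs.hasDerivAt_deriv x).neg

lemma energy_eq (hWd : Differentiable ℝ W) (hs : SolvesODE W u u') (x y : ℝ) :
    u' x ^ 2 - 2 * W (u x) = u' y ^ 2 - 2 * W (u y) := by
  have hE : ∀ x, HasDerivAt (fun x => u' x ^ 2 - 2 * W (u x)) 0 x := fun x =>
    (((hs.hasDerivAt_deriv x).pow 2).sub
      (((hWd (u x)).hasDerivAt.comp x (hs.hasDerivAt x)).const_mul 2)).congr_deriv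
      (by norm_num; ring)
  exact is_const_of_deriv_eq_zero (fun x => (hE x).differentiableAt) (fun x => (hE x).deriv) x y

lemma monotone_mul_deriv (hW : ∀ t, 0 ≤ t * deriv W t) (hs : SolvesODE W u u') :
    Monotone fun x => u x * u' x :=
  monotone_of_hasDerivAt_nonneg (fun x => (hs.hasDerivAt x).mul (hs.hasDerivAt_deriv x))
    fun x => add_nonneg (mul_self_nonneg (u' x)) (hW (u x))

lemma not_tendsto_atTop (hWd : Differentiable ℝ W) (hW : Tendsto W atTop atTop)
    (hWint : IntegrableOn (fun t => 1 / √(W t)) (Ioi 1)) (hs : SolvesODE W u u')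
    (hu'pos : ∀ᶠ x in atTop, 0 < u' x) : ¬ Tendsto u atTop atTop := by
  intro hu
  set c := u' 0 ^ 2 - 2 * W (u 0)
  obtain ⟨x₀, hx₀⟩ := eventually_atTop.1 <| (hu.eventually_gt_atTop 1).and <|
    ((hW.comp hu).eventually_gt_atTop 0).and <|
    ((hW.comp hu).eventually_ge_atTop (-c)).and hu'pos
  simp only [Function.comp_apply] at hx₀
  refine hWint.not_forall_one_le_comp_mul_deriv (fun t => by positivity) hs.hasDerivAt
    (fun x hx => (hx₀ x hx).1) (fun x hx => ?_) fun x hx => ?_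
  · exact continuousAt_const.div hWd.continuous.sqrt.continuousAt
      (Real.sqrt_pos.2 (hx₀ x hx).2.1).ne'
  · obtain ⟨-, hWu, hWc, hu'x⟩ := hx₀ x hx
    have henergy := hs.energy_eq hWd x 0
    have hsqrt : √(W (u x)) ≤ u' x := (Real.sqrt_le_left hu'x.le).2 (by linarith)
    rw [one_div_mul_eq_div, le_div_iff₀ (Real.sqrt_pos.2 hWu)]
    linarith

lemma mul_deriv_nonpos (hWd : Differentiable ℝ W) (hWmono : ∀ t, 0 ≤ t * deriv W t)
    (hWtop : Tendsto W atTop atTop) (hWbot : Tendsto W atBot atTop)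
    (hWint : IntegrableOn (fun t => 1 / √(W t)) {t | 1 < |t|}) (hs : SolvesODE W u u')
    (x : ℝ) : u x * u' x ≤ 0 := by
  by_contra! hprod
  have hmul : ∀ y, x ≤ y → u x * u' x ≤ u y * u' y := fun y hy =>
    hs.monotone_mul_deriv hWmono hy
  rcases lt_or_gt_of_ne (left_ne_zero_of_mul hprod.ne') with hux | hux
  · -- `-u` solves the equation for `W (-·)` and escapes to `+∞`
    have hs' := hs.neg
    obtain ⟨htop, hder⟩ := tendsto_atTop_of_mul_deriv_ge hs'.hasDerivAt (x₁ := x)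
      hprod (by simpa using hux) (fun y hy => by simpa using hmul y hy)
    refine hs'.not_tendsto_atTop (hWd.comp differentiable_neg)
      (hWbot.comp tendsto_neg_atTop_atBot) ?_ hder htop
    have hWint' : IntegrableOn (fun t => 1 / √(W t)) (Iio (-1)) :=
      hWint.mono_set fun t (ht : t < -1) => lt_abs.2 (Or.inr (lt_neg_of_lt_neg ht))
    simpa [Function.comp_def] using
      ((Measure.measurePreserving_neg volume).integrableOn_comp_preimage
        (Homeomorph.neg ℝ).measurableEmbedding).2 hWint'
  · obtain ⟨htop, hder⟩ := tendsto_atTop_of_mul_deriv_ge hs.hasDerivAt hprod hux hmul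
    refine hs.not_tendsto_atTop hWd hWtop ?_ hder htop
    exact hWint.mono_set fun t (ht : 1 < t) => lt_abs.2 (Or.inl ht)

end SolvesODE

theorem zero_unique_entire_ode_solution
    (W : ℝ → ℝ) (hW : ContDiff ℝ 2 W) (hWnn : ∀ t, 0 ≤ W t)
    (hWconv : ConvexOn ℝ Set.univ W) (hWvan : ∀ t, W t = 0 ↔ t = 0)
    (hWint : IntegrableOn (fun u => 1 / Real.sqrt (W u)) {u : ℝ | 1 < |u|})
    (u u' : ℝ → ℝ)
    (hu : ∀ x : ℝ, HasDerivAt u (u' x) x)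
    (hu' : ∀ x : ℝ, HasDerivAt u' (deriv W (u x)) x) :
    ∀ x : ℝ, u x = 0 := by
  have hs : SolvesODE W u u' := ⟨hu, hu'⟩
  have hWd : Differentiable ℝ W := hW.differentiable two_ne_zero
  have hW0 : W 0 = 0 := (hWvan 0).2 rfl
  have hWpos : ∀ t, t ≠ 0 → 0 < W t := fun t ht => (hWnn t).lt_of_ne' (mt (hWvan t).1 ht)
  have hWtan : ∀ t, W t ≤ t * deriv W t := fun t => by
    linarith [hWconv.add_deriv_mul_sub_le (hWd t) 0]
  have hWtop := hWconv.tendsto_atTop_of_lt one_pos (by rw [hW0]; exact hWpos 1 one_ne_zero)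
  have hWbot := hWconv.tendsto_atBot_of_lt neg_one_lt_zero
    (by rw [hW0]; exact hWpos (-1) (by norm_num))
  have hnonpos {u u' : ℝ → ℝ} (hs : SolvesODE W u u') : ∀ x, u x * u' x ≤ 0 :=
    hs.mul_deriv_nonpos hWd (fun t => (hWnn t).trans (hWtan t)) hWtop hWbot hWint
  intro x
  have hzero : u * u' = 0 := funext fun y =>
    le_antisymm (hnonpos hs y) (by simpa using hnonpos hs.comp_neg (-y))
  have hderiv : u' x * u' x + u x * deriv W (u x) = 0 :=
    ((hs.hasDerivAt x).mul (hs.hasDerivAt_deriv x)).unique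
      (by rw [hzero]; exact hasDerivAt_const x 0)
  have hWu : W (u x) ≤ 0 := by nlinarith [hWtan (u x), mul_self_nonneg (u' x)]
  exact (hWvan _).1 (le_antisymm hWu (hWnn _))
end

section
/- If ∫_{u>1} du/√(W(u)) = ∞ and ∫_{u<−1} du/√(W(u)) = ∞, then every maximal solution of u'' = W'(u) is defined on all of ℝ. -/
/-!
Write `u'' = W'(u)` as the first-order system `(u, w)' = (w, W'(u))`, whose right-hand side is
`C¹`. Local solutions exist and are unique, and since the local existence time is uniform on
bounded sets of initial data, a solution can be continued as long as it stays bounded on bounded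
time intervals.

Boundedness comes from the energy `w² - 2 W(u)`, which is conserved: with `C = b² + 1` it gives
`|w| ≤ √(2 W(u) + C)`, so `Φ(y) = ∫₀^y dx / √(2 W(x) + C)` changes by at most `|t|` along the
solution. Convexity gives `W ≥ W(±1) > 0` outside `(-1, 1)`, hence `2 W + C ≤ K W` there, and the
divergence of `∫ du / √W` at `±∞` makes `Φ` tend to `±∞`. Thus on `(-T, T)` the position stays in
a compact set, and by the energy bound so does the velocity.
-/

open MeasureTheory Set Metric Filter Topology
open scoped NNReal

section IntegralCurve

variable {E : Type*} [NormedAddCommGroup E] [NormedSpace ℝ E] {v : E → E} {γ γ' : ℝ → E}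

theorem IsIntegralCurveOn.hasDerivAt_of_mem_Ioo {a b t : ℝ}
    (hγ : IsIntegralCurveOn γ (fun _ ↦ v) (Ioo a b)) (ht : t ∈ Ioo a b) :
    HasDerivAt γ (v (γ t)) t :=
  (hγ t ht).hasDerivAt (Ioo_mem_nhds ht.1 ht.2)

theorem IsIntegralCurveOn.eqOn_Ioo (hv : ContDiff ℝ 1 v) {a b t₀ : ℝ}
    (hγ : IsIntegralCurveOn γ (fun _ ↦ v) (Ioo a b))
    (hγ' : IsIntegralCurveOn γ' (fun _ ↦ v) (Ioo a b)) (ht₀ : t₀ ∈ Ioo a b)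
    (h : γ t₀ = γ' t₀) : EqOn γ γ' (Ioo a b) := by
  intro t ht
  obtain ⟨a', ha', ha't⟩ := exists_between (lt_min ht.1 ht₀.1)
  obtain ⟨b', hb't, hb'⟩ := exists_between (max_lt ht.2 ht₀.2)
  have hsub : Icc a' b' ⊆ Ioo a b := Icc_subset_Ioo ha' hb'
  set K := γ '' Icc a' b' ∪ γ' '' Icc a' b'
  have hK : IsCompact K :=
    (isCompact_Icc.image_of_continuousOn (hγ.continuousOn.mono hsub)).union
      (isCompact_Icc.image_of_continuousOn (hγ'.continuousOn.mono hsub))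
  obtain ⟨L, hL⟩ := hv.locallyLipschitz.locallyLipschitzOn.exists_lipschitzOnWith_of_compact hK
  refine ODE_solution_unique_of_mem_Icc (v := fun _ ↦ v) (s := fun _ ↦ K) (fun _ _ ↦ hL)
    ⟨(min_le_right _ _).trans_lt' ha't, hb't.trans_le' (le_max_right _ _)⟩
    (hγ.continuousOn.mono hsub)
    (fun s hs ↦ hγ.hasDerivAt_of_mem_Ioo (hsub (Ioo_subset_Icc_self hs)))
    (fun s hs ↦ Or.inl (mem_image_of_mem _ (Ioo_subset_Icc_self hs)))
    (hγ'.continuousOn.mono hsub)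
    (fun s hs ↦ hγ'.hasDerivAt_of_mem_Ioo (hsub (Ioo_subset_Icc_self hs)))
    (fun s hs ↦ Or.inr (mem_image_of_mem _ (Ioo_subset_Icc_self hs))) h
    ⟨(min_le_left _ _).trans' ha't.le, hb't.le.trans' (le_max_left _ _)⟩

theorem IsIntegralCurveOn.piecewise_Ioo (hv : ContDiff ℝ 1 v) {a b a' b' t₀ : ℝ}
    (hγ : IsIntegralCurveOn γ (fun _ ↦ v) (Ioo a b))
    (hγ' : IsIntegralCurveOn γ' (fun _ ↦ v) (Ioo a' b'))
    (ht₀ : t₀ ∈ Ioo a b ∩ Ioo a' b') (h : γ t₀ = γ' t₀) :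
    IsIntegralCurveOn ((Ioo a b).piecewise γ γ') (fun _ ↦ v) (Ioo a b ∪ Ioo a' b') := by
  have hagree : EqOn ((Ioo a b).piecewise γ γ') γ' (Ioo a' b') := by
    have hI : t₀ ∈ Ioo (max a a') (min b b') :=
      ⟨max_lt ht₀.1.1 ht₀.2.1, lt_min ht₀.1.2 ht₀.2.2⟩
    intro t ht
    by_cases htab : t ∈ Ioo a b
    · rw [piecewise_eq_of_mem _ _ _ htab]
      exact (hγ.mono (Ioo_subset_Ioo (le_max_left _ _) (min_le_left _ _))).eqOn_Ioo hv
        (hγ'.mono (Ioo_subset_Ioo (le_max_right _ _) (min_le_right _ _))) hI h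
        ⟨max_lt htab.1 ht.1, lt_min htab.2 ht.2⟩
    · rw [piecewise_eq_of_notMem _ _ _ htab]
  intro t ht
  refine HasDerivAt.hasDerivWithinAt ?_
  by_cases htab : t ∈ Ioo a b
  · rw [piecewise_eq_of_mem _ _ _ htab]
    exact (hγ.hasDerivAt_of_mem_Ioo htab).congr_of_eventuallyEq
      (eventuallyEq_of_mem (Ioo_mem_nhds htab.1 htab.2) (fun s hs ↦ piecewise_eq_of_mem _ _ _ hs))
  · have ht' : t ∈ Ioo a' b' := ht.resolve_left htab
    rw [hagree ht']
    exact (hγ'.hasDerivAt_of_mem_Ioo ht').congr_of_eventuallyEq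
      (eventuallyEq_of_mem (Ioo_mem_nhds ht'.1 ht'.2) hagree)

theorem exists_pos_forall_norm_le_isIntegralCurveOn [ProperSpace E] [CompleteSpace E]
    (hv : ContDiff ℝ 1 v) (R : ℝ) :
    ∃ δ > 0, ∀ (t₀ : ℝ) (x : E), ‖x‖ ≤ R → ∃ γ : ℝ → E, γ t₀ = x ∧
      IsIntegralCurveOn γ (fun _ ↦ v) (Ioo (t₀ - δ) (t₀ + δ)) := by
  set r : ℝ≥0 := R.toNNReal
  obtain ⟨C, hC⟩ := (isCompact_closedBall (0 : E) (r + 1)).exists_bound_of_continuousOn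
    hv.continuous.continuousOn
  obtain ⟨K, hK⟩ := hv.locallyLipschitz.locallyLipschitzOn.exists_lipschitzOnWith_of_compact
    (isCompact_closedBall (0 : E) (r + 1))
  set L : ℝ≥0 := C.toNNReal
  have hδ : (0 : ℝ) < 1 / (L + 1) := by positivity
  refine ⟨1 / (L + 1), hδ, fun t₀ x hx ↦ ?_⟩
  have hpl : IsPicardLindelof (fun _ ↦ v) (tmin := t₀ - 1 / (L + 1)) (tmax := t₀ + 1 / (L + 1))
      ⟨t₀, by constructor <;> linarith⟩ 0 (r + 1) r L K := by
    refine .of_time_independent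
      (fun y hy ↦ (hC y (by exact_mod_cast hy)).trans (Real.le_coe_toNNReal C))
      (by exact_mod_cast hK) ?_
    simp only [add_sub_cancel_left, sub_sub_cancel, max_self]
    push_cast
    rw [add_sub_cancel_left, mul_one_div, div_le_one (by positivity)]
    linarith
  obtain ⟨γ, hγ₀, hγ⟩ := hpl.exists_eq_forall_mem_Icc_hasDerivWithinAt
    (mem_closedBall_zero_iff.mpr (hx.trans (Real.le_coe_toNNReal R)))
  exact ⟨γ, hγ₀, fun t ht ↦ (hγ t (Ioo_subset_Icc_self ht)).mono Ioo_subset_Icc_self⟩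

theorem IsIntegralCurveOn.exists_extend_Ioo (hv : ContDiff ℝ 1 v) {ε δ : ℝ}
    (hδ : 0 < δ) (hδε : δ ≤ ε) (hγ : IsIntegralCurveOn γ (fun _ ↦ v) (Ioo (-ε) ε))
    (hloc : ∀ t₀ ∈ Ioo (-ε) ε, ∃ γ' : ℝ → E, γ' t₀ = γ t₀ ∧
      IsIntegralCurveOn γ' (fun _ ↦ v) (Ioo (t₀ - δ) (t₀ + δ))) :
    ∃ γ' : ℝ → E, γ' 0 = γ 0 ∧
      IsIntegralCurveOn γ' (fun _ ↦ v) (Ioo (-(ε + δ / 2)) (ε + δ / 2)) := by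
  have hr : ε - δ / 2 ∈ Ioo (-ε) ε := ⟨by linarith, by linarith⟩
  have hl : -(ε - δ / 2) ∈ Ioo (-ε) ε := ⟨by linarith, by linarith⟩
  have h₀ : (0 : ℝ) ∈ Ioo (-ε) ε := ⟨by linarith, by linarith⟩
  have hsub : Ioo (-ε) ε ⊆ Ioo (-ε) (ε + δ / 2) := Ioo_subset_Ioo_right (by linarith)
  obtain ⟨γr, hγr₀, hγr⟩ := hloc _ hr
  obtain ⟨γl, hγl₀, hγl⟩ := hloc _ hl
  have hright := (hγ.piecewise_Ioo hv hγr ⟨hr, by constructor <;> linarith⟩ hγr₀.symm).mono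
    (s' := Ioo (-ε) (ε + δ / 2)) fun t ht ↦ by
      by_cases h : t < ε
      · exact Or.inl ⟨ht.1, h⟩
      · exact Or.inr ⟨by linarith [ht.1], by linarith [ht.2]⟩
  have hboth := (hright.piecewise_Ioo hv hγl ⟨hsub hl, by constructor <;> linarith⟩
    (by rw [piecewise_eq_of_mem _ _ _ hl, hγl₀])).mono
    (s' := Ioo (-(ε + δ / 2)) (ε + δ / 2)) fun t ht ↦ by
      by_cases h : -ε < t
      · exact Or.inl ⟨h, ht.2⟩
      · exact Or.inr ⟨by linarith [ht.1], by linarith [ht.2]⟩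
  refine ⟨_, ?_, hboth⟩
  rw [piecewise_eq_of_mem _ _ _ (hsub h₀), piecewise_eq_of_mem _ _ _ h₀]

theorem exists_isIntegralCurveOn_Ioo_of_norm_le [ProperSpace E] [CompleteSpace E]
    (hv : ContDiff ℝ 1 v) (x₀ : E) {T R : ℝ}
    (hR : ∀ ε ≤ T, ∀ γ : ℝ → E, γ 0 = x₀ → IsIntegralCurveOn γ (fun _ ↦ v) (Ioo (-ε) ε) →
      ∀ t ∈ Ioo (-ε) ε, ‖γ t‖ ≤ R) :
    ∃ γ : ℝ → E, γ 0 = x₀ ∧ IsIntegralCurveOn γ (fun _ ↦ v) (Ioo (-T) T) := by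
  obtain ⟨δ, hδ, hloc⟩ := exists_pos_forall_norm_le_isIntegralCurveOn hv (max R ‖x₀‖)
  set P : ℝ → Prop :=
    fun ε ↦ ∃ γ : ℝ → E, γ 0 = x₀ ∧ IsIntegralCurveOn γ (fun _ ↦ v) (Ioo (-ε) ε)
  have hmono {ε ε' : ℝ} (h : ε' ≤ ε) : P ε → P ε' := fun ⟨γ, hγ₀, hγ⟩ ↦
    ⟨γ, hγ₀, hγ.mono (Ioo_subset_Ioo (neg_le_neg h) h)⟩
  have hbase : P δ := by simpa using hloc 0 x₀ (le_max_right _ _)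
  have hstep {ε : ℝ} (hδε : δ ≤ ε) (hεT : ε ≤ T) : P ε → P (ε + δ / 2) := by
    rintro ⟨γ, hγ₀, hγ⟩
    obtain ⟨γ', hγ'₀, hγ'⟩ := hγ.exists_extend_Ioo hv hδ hδε fun t₀ ht₀ ↦
      hloc t₀ (γ t₀) ((hR ε hεT γ hγ₀ hγ t₀ ht₀).trans (le_max_left _ _))
    exact ⟨γ', hγ'₀.trans hγ₀, hγ'⟩
  -- capping at `T` keeps every step inside the window where the bound `hR` applies
  have hiter (n : ℕ) : P (min (δ + n * (δ / 2)) T) := by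
    induction n with
    | zero => simpa using hmono (min_le_left _ _) hbase
    | succ n ih =>
      by_cases h : δ + n * (δ / 2) ≤ T
      · rw [min_eq_left h] at ih
        refine hmono ?_ (hstep (le_add_of_nonneg_right (by positivity)) h ih)
        push_cast
        linarith [min_le_left (δ + (n + 1) * (δ / 2)) T]
      · rw [min_eq_right (not_le.mp h).le] at ih
        exact hmono (min_le_right _ _) ih
  obtain ⟨n, hn⟩ := exists_nat_ge (T / (δ / 2))
  rw [div_le_iff₀ (by positivity)] at hn
  simpa [min_eq_right (by linarith : T ≤ δ + n * (δ / 2))] using hiter n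

theorem exists_isIntegralCurve_of_forall_isIntegralCurveOn_Ioo (hv : ContDiff ℝ 1 v) {x₀ : E}
    (h : ∀ T, ∃ γ : ℝ → E, γ 0 = x₀ ∧ IsIntegralCurveOn γ (fun _ ↦ v) (Ioo (-T) T)) :
    ∃ γ : ℝ → E, γ 0 = x₀ ∧ IsIntegralCurve γ (fun _ ↦ v) := by
  choose γ hγ₀ hγ using h
  have huniq {T T' : ℝ} (hT : 0 < T) (hTT' : T ≤ T') : EqOn (γ T) (γ T') (Ioo (-T) T) :=
    (hγ T).eqOn_Ioo hv ((hγ T').mono (Ioo_subset_Ioo (neg_le_neg hTT') hTT'))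
      ⟨neg_lt_zero.mpr hT, hT⟩ ((hγ₀ T).trans (hγ₀ T').symm)
  have hagree (T : ℝ) : EqOn (fun t ↦ γ (|t| + 1) t) (γ T) (Ioo (-T) T) := by
    intro t ht
    rcases le_total (|t| + 1) T with h | h
    · exact huniq (by positivity) h (abs_lt.mp (lt_add_one |t|))
    · exact (huniq (by linarith [ht.1, ht.2]) h ht).symm
  refine ⟨fun t ↦ γ (|t| + 1) t, by simpa using hγ₀ 1, fun t ↦ ?_⟩
  have ht : t ∈ Ioo (-(|t| + 1)) (|t| + 1) := abs_lt.mp (lt_add_one |t|)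
  rw [hagree _ ht]
  exact ((hγ _).hasDerivAt_of_mem_Ioo ht).congr_of_eventuallyEq
    (eventuallyEq_of_mem (Ioo_mem_nhds ht.1 ht.2) (hagree _))

theorem exists_isIntegralCurve_of_norm_le [ProperSpace E] [CompleteSpace E]
    (hv : ContDiff ℝ 1 v) (x₀ : E) (hbound : ∀ T, ∃ R, ∀ ε ≤ T, ∀ γ : ℝ → E, γ 0 = x₀ →
      IsIntegralCurveOn γ (fun _ ↦ v) (Ioo (-ε) ε) → ∀ t ∈ Ioo (-ε) ε, ‖γ t‖ ≤ R) :
    ∃ γ : ℝ → E, γ 0 = x₀ ∧ IsIntegralCurve γ (fun _ ↦ v) :=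
  exists_isIntegralCurve_of_forall_isIntegralCurveOn_Ioo hv fun _ ↦
    (hbound _).elim fun _ hR ↦ exists_isIntegralCurveOn_Ioo_of_norm_le hv x₀ hR

end IntegralCurve

theorem tendsto_integral_atTop_of_not_integrableOn_Ioi {g : ℝ → ℝ} (hg : Continuous g)
    (hg₀ : ∀ x, 0 ≤ g x) {a : ℝ} (h : ¬ IntegrableOn g (Ioi a)) (b : ℝ) :
    Tendsto (fun y ↦ ∫ x in b..y, g x) atTop atTop := by
  have hsplit (c d : ℝ) := intervalIntegral.integral_add_adjacent_intervals
    (hg.intervalIntegrable (μ := volume) b c) (hg.intervalIntegrable c d)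
  refine tendsto_atTop_atTop_of_monotone (fun y y' hyy' ↦ ?_) fun M ↦ ?_
  · linarith [hsplit y y', intervalIntegral.integral_nonneg (μ := volume) hyy' fun x _ ↦ hg₀ x]
  · by_contra! hbdd
    refine h (integrableOn_Ioi_of_intervalIntegral_norm_bounded (M - ∫ x in b..a, g x) a
      (fun _ ↦ hg.integrableOn_Ioc) tendsto_id (Eventually.of_forall fun y ↦ ?_))
    simp_rw [Real.norm_of_nonneg (hg₀ _), id]
    linarith [hsplit a y, hbdd y]

theorem tendsto_integral_atBot_of_not_integrableOn_Iio {g : ℝ → ℝ} (hg : Continuous g)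
    (hg₀ : ∀ x, 0 ≤ g x) {a : ℝ} (h : ¬ IntegrableOn g (Iio a)) (b : ℝ) :
    Tendsto (fun y ↦ ∫ x in b..y, g x) atBot atBot := by
  have hneg : ¬ IntegrableOn (fun x ↦ g (-x)) (Ioi (-a)) := by
    rwa [← neg_Iio, ← neg_preimage, ← Function.comp_def,
      (Measure.measurePreserving_neg volume).integrableOn_comp_preimage
        (Homeomorph.neg ℝ).measurableEmbedding]
  have hrefl (y : ℝ) : ∫ x in b..y, g x = -∫ x in -b..-y, g (-x) := by
    rw [intervalIntegral.integral_comp_neg, neg_neg, neg_neg, intervalIntegral.integral_symm]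
  simp_rw [hrefl]
  exact tendsto_neg_atTop_atBot.comp <|
    (tendsto_integral_atTop_of_not_integrableOn_Ioi (hg.comp continuous_neg) (fun _ ↦ hg₀ _)
      hneg (-b)).comp tendsto_neg_atBot_atTop

theorem exists_abs_le_of_tendsto {Φ : ℝ → ℝ} (hTop : Tendsto Φ atTop atTop)
    (hBot : Tendsto Φ atBot atBot) (M : ℝ) : ∃ R, ∀ y, |Φ y| ≤ M → |y| ≤ R := by
  obtain ⟨B, hB⟩ := eventually_atTop.mp (hTop.eventually_gt_atTop M)
  obtain ⟨B', hB'⟩ := eventually_atBot.mp (hBot.eventually_lt_atBot (-M))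
  refine ⟨max |B| |B'|, fun y hy ↦ abs_le.mpr ⟨?_, ?_⟩⟩
  · have : B' < y := lt_of_not_ge fun h ↦ by linarith [hB' y h, (abs_le.mp hy).1]
    linarith [neg_abs_le B', le_max_right |B| |B'|]
  · have : y < B := lt_of_not_ge fun h ↦ by linarith [hB y h, (abs_le.mp hy).2]
    linarith [le_abs_self B, le_max_left |B| |B'|]

theorem not_integrableOn_one_div_sqrt_two_mul_add {W : ℝ → ℝ} (hW : Continuous W) {S : Set ℝ}
    (hS : MeasurableSet S) {m : ℝ} (hm : 0 < m) (hWS : ∀ x ∈ S, m ≤ W x) {C : ℝ} (hC : 0 < C)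
    (h : ¬ IntegrableOn (fun x ↦ 1 / √(W x)) S) :
    ¬ IntegrableOn (fun x ↦ 1 / √(2 * W x + C)) S := by
  intro hint
  set K := 2 + C / m
  refine h ((hint.const_mul √K).mono' (by fun_prop : Measurable _).aestronglyMeasurable
    (ae_restrict_of_forall_mem hS fun x hx ↦ ?_))
  have hWx : 0 < W x := hm.trans_le (hWS x hx)
  have hle : 2 * W x + C ≤ K * W x := by
    have : C ≤ C / m * W x := by
      rw [div_mul_eq_mul_div, le_div_iff₀ hm]
      exact mul_le_mul_of_nonneg_left (hWS x hx) hC.le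
    linarith
  rw [Real.norm_of_nonneg (by positivity), mul_one_div, div_le_div_iff₀ (by positivity)
    (by positivity), one_mul, ← Real.sqrt_mul (by positivity)]
  exact Real.sqrt_le_sqrt hle

section Newton

variable {W : ℝ → ℝ} {C : ℝ}

theorem continuous_one_div_sqrt_two_mul_add (hW : Continuous W) (hW₀ : ∀ x, 0 ≤ W x)
    (hC : 0 < C) : Continuous fun x ↦ 1 / √(2 * W x + C) :=
  continuous_const.div (by fun_prop) fun x ↦ (Real.sqrt_pos.mpr (by linarith [hW₀ x])).ne'

noncomputable def newtonField (W : ℝ → ℝ) (p : ℝ × ℝ) : ℝ × ℝ := (p.2, deriv W p.1)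

/-- A solution of `u'' = W'(u)` with `u'^2 ≤ 2 W(u) + C` needs at least the time
`|travelTime W C y - travelTime W C z|` to move from `z` to `y`. -/
noncomputable def travelTime (W : ℝ → ℝ) (C y : ℝ) : ℝ := ∫ x in (0 : ℝ)..y, 1 / √(2 * W x + C)

theorem contDiff_newtonField (hW : ContDiff ℝ 2 W) : ContDiff ℝ 1 (newtonField W) :=
  contDiff_snd.prodMk (hW.deriv'.comp contDiff_fst)

theorem HasDerivWithinAt.newtonField_fst_snd {f : ℝ → ℝ × ℝ} {s : Set ℝ} {t : ℝ}
    (h : HasDerivWithinAt f (newtonField W (f t)) s t) :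
    HasDerivWithinAt (fun τ ↦ (f τ).1) (f t).2 s t ∧
      HasDerivWithinAt (fun τ ↦ (f τ).2) (deriv W (f t).1) s t :=
  ⟨(hasFDerivAt_fst (p := f t)).comp_hasDerivWithinAt t h,
    (hasFDerivAt_snd (p := f t)).comp_hasDerivWithinAt t h⟩

theorem IsIntegralCurveOn.newtonField_energy_eq (hW : Differentiable ℝ W) {f : ℝ → ℝ × ℝ}
    {s : Set ℝ} (hs : Convex ℝ s) (hf : IsIntegralCurveOn f (fun _ ↦ newtonField W) s)
    {t₀ t : ℝ} (ht₀ : t₀ ∈ s) (ht : t ∈ s) :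
    (f t).2 ^ 2 - 2 * W (f t).1 = (f t₀).2 ^ 2 - 2 * W (f t₀).1 := by
  have hderiv (τ : ℝ) (hτ : τ ∈ s) :
      HasDerivWithinAt (fun τ ↦ (f τ).2 ^ 2 - 2 * W (f τ).1) 0 s τ := by
    obtain ⟨hu, hw⟩ := (hf τ hτ).newtonField_fst_snd
    exact ((hw.pow 2).sub (((hW _).hasDerivAt.comp_hasDerivWithinAt τ hu).const_mul 2))
      |>.congr_deriv (by ring)
  simpa [sub_eq_zero] using
    hs.norm_image_sub_le_of_norm_hasDerivWithin_le hderiv (fun _ _ ↦ norm_zero.le) ht₀ ht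

theorem hasDerivAt_travelTime (hW : Continuous W) (hW₀ : ∀ x, 0 ≤ W x) {C : ℝ} (hC : 0 < C)
    (y : ℝ) : HasDerivAt (travelTime W C) (1 / √(2 * W y + C)) y :=
  have hg := continuous_one_div_sqrt_two_mul_add hW hW₀ hC
  intervalIntegral.integral_hasDerivAt_right (hg.intervalIntegrable _ _)
    hg.aestronglyMeasurable.stronglyMeasurableAtFilter hg.continuousAt

theorem IsIntegralCurveOn.abs_travelTime_sub_le (hW : Differentiable ℝ W) (hW₀ : ∀ x, 0 ≤ W x)
    {C : ℝ} (hC : 0 < C) {f : ℝ → ℝ × ℝ} {s : Set ℝ} (hs : Convex ℝ s)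
    (hf : IsIntegralCurveOn f (fun _ ↦ newtonField W) s)
    (henergy : ∀ τ ∈ s, (f τ).2 ^ 2 ≤ 2 * W (f τ).1 + C) {t₀ t : ℝ} (ht₀ : t₀ ∈ s)
    (ht : t ∈ s) :
    |travelTime W C (f t).1 - travelTime W C (f t₀).1| ≤ |t - t₀| := by
  have hderiv (τ : ℝ) (hτ : τ ∈ s) : HasDerivWithinAt (fun τ ↦ travelTime W C (f τ).1)
      (1 / √(2 * W (f τ).1 + C) * (f τ).2) s τ :=
    (hasDerivAt_travelTime hW.continuous hW₀ hC _).comp_hasDerivWithinAt τ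
      (hf τ hτ).newtonField_fst_snd.1
  have hbound (τ : ℝ) (hτ : τ ∈ s) : ‖1 / √(2 * W (f τ).1 + C) * (f τ).2‖ ≤ 1 := by
    have hpos : 0 < √(2 * W (f τ).1 + C) := Real.sqrt_pos.mpr (by linarith [hW₀ (f τ).1])
    rw [Real.norm_eq_abs, abs_mul, abs_of_pos (one_div_pos.mpr hpos), one_div_mul_eq_div,
      div_le_one hpos]
    exact Real.abs_le_sqrt (henergy τ hτ)
  simpa using hs.norm_image_sub_le_of_norm_hasDerivWithin_le hderiv hbound ht₀ ht

theorem tendsto_travelTime_atTop (hW : Continuous W) (hW₀ : ∀ x, 0 ≤ W x)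
    (hconv : ConvexOn ℝ univ W) (h01 : W 0 ≤ W 1) (h1 : 0 < W 1) (hC : 0 < C)
    (hgrow : ¬ IntegrableOn (fun x ↦ 1 / √(W x)) (Ioi 1)) :
    Tendsto (travelTime W C) atTop atTop :=
  tendsto_integral_atTop_of_not_integrableOn_Ioi (continuous_one_div_sqrt_two_mul_add hW hW₀ hC)
    (fun _ ↦ by positivity) (not_integrableOn_one_div_sqrt_two_mul_add hW measurableSet_Ioi h1
      (fun x hx ↦ hconv.le_right_of_left_le'' (mem_univ 0) (mem_univ x) one_pos hx.le h01)
      hC hgrow) 0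

theorem tendsto_travelTime_atBot (hW : Continuous W) (hW₀ : ∀ x, 0 ≤ W x)
    (hconv : ConvexOn ℝ univ W) (h01 : W 0 ≤ W (-1)) (h1 : 0 < W (-1)) (hC : 0 < C)
    (hgrow : ¬ IntegrableOn (fun x ↦ 1 / √(W x)) (Iio (-1))) :
    Tendsto (travelTime W C) atBot atBot :=
  tendsto_integral_atBot_of_not_integrableOn_Iio (continuous_one_div_sqrt_two_mul_add hW hW₀ hC)
    (fun _ ↦ by positivity) (not_integrableOn_one_div_sqrt_two_mul_add hW measurableSet_Iio h1
      (fun x hx ↦ hconv.le_left_of_right_le'' (mem_univ x) (mem_univ 0) hx.le (by norm_num) h01)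
      hC hgrow) 0

theorem exists_norm_le_of_isIntegralCurveOn_newtonField (hW : Differentiable ℝ W)
    (hW₀ : ∀ x, 0 ≤ W x) (hTop : ∀ C > 0, Tendsto (travelTime W C) atTop atTop)
    (hBot : ∀ C > 0, Tendsto (travelTime W C) atBot atBot) (y₀ : ℝ × ℝ) (T : ℝ) :
    ∃ R, ∀ ε ≤ T, ∀ f : ℝ → ℝ × ℝ, f 0 = y₀ →
      IsIntegralCurveOn f (fun _ ↦ newtonField W) (Ioo (-ε) ε) →
      ∀ t ∈ Ioo (-ε) ε, ‖f t‖ ≤ R := by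
  set C := y₀.2 ^ 2 + 1
  have hC : 0 < C := by positivity
  obtain ⟨R₁, hR₁⟩ :=
    exists_abs_le_of_tendsto (hTop C hC) (hBot C hC) (|travelTime W C y₀.1| + T)
  obtain ⟨R₂, hR₂⟩ := (isCompact_Icc (a := -R₁) (b := R₁)).exists_bound_of_continuousOn
    hW.continuous.continuousOn
  refine ⟨max R₁ √(2 * R₂ + C), fun ε hεT f hf₀ hf t ht ↦ ?_⟩
  have h₀ : (0 : ℝ) ∈ Ioo (-ε) ε := ⟨by linarith [ht.1, ht.2], by linarith [ht.1, ht.2]⟩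
  have henergy (τ : ℝ) (hτ : τ ∈ Ioo (-ε) ε) : (f τ).2 ^ 2 ≤ 2 * W (f τ).1 + C := by
    have := hf.newtonField_energy_eq hW (convex_Ioo _ _) h₀ hτ
    rw [hf₀] at this
    linarith [hW₀ y₀.1]
  have htravel := hf.abs_travelTime_sub_le hW hW₀ hC (convex_Ioo _ _) henergy h₀ ht
  rw [hf₀, sub_zero] at htravel
  have hu : |(f t).1| ≤ R₁ := hR₁ _ (by
    linarith [abs_sub_abs_le_abs_sub (travelTime W C (f t).1) (travelTime W C y₀.1),
      abs_lt.mpr ⟨ht.1, ht.2⟩])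
  have hw : |(f t).2| ≤ √(2 * R₂ + C) := Real.abs_le_sqrt (by
    linarith [henergy t ht, (le_abs_self _).trans (hR₂ _ (abs_le.mp hu))])
  rw [Prod.norm_def, Real.norm_eq_abs, Real.norm_eq_abs]
  exact max_le_max hu hw

end Newton

theorem global_existence_without_growth
    (W : ℝ → ℝ) (hW : ContDiff ℝ 2 W) (hWnn : ∀ t, 0 ≤ W t)
    (hWconv : ConvexOn ℝ Set.univ W) (hWvan : ∀ t, W t = 0 ↔ t = 0)
    (hWgrowPos : ¬ IntegrableOn (fun u => 1 / Real.sqrt (W u)) (Ioi (1:ℝ)))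
    (hWgrowNeg : ¬ IntegrableOn (fun u => 1 / Real.sqrt (W u)) (Iio (-1:ℝ))) :
    ∀ x₀ a b : ℝ, ∃ u u' : ℝ → ℝ,
      u x₀ = a ∧ u' x₀ = b ∧
      ∀ x : ℝ, HasDerivAt u (u' x) x ∧ HasDerivAt u' (deriv W (u x)) x := by
  intro x₀ a b
  have hW0 : W 0 = 0 := (hWvan 0).mpr rfl
  have hpos (t : ℝ) (ht : t ≠ 0) : 0 < W t := (hWnn t).lt_of_ne' fun h ↦ ht ((hWvan t).mp h)
  have hTop (C : ℝ) (hC : 0 < C) := tendsto_travelTime_atTop hW.continuous hWnn hWconv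
    (hW0.trans_le (hWnn 1)) (hpos 1 one_ne_zero) hC hWgrowPos
  have hBot (C : ℝ) (hC : 0 < C) := tendsto_travelTime_atBot hW.continuous hWnn hWconv
    (hW0.trans_le (hWnn (-1))) (hpos (-1) (by norm_num)) hC hWgrowNeg
  obtain ⟨f, hf₀, hf⟩ := exists_isIntegralCurve_of_norm_le (contDiff_newtonField hW) (a, b)
    (exists_norm_le_of_isIntegralCurveOn_newtonField (hW.differentiable (by norm_num)) hWnn
      hTop hBot (a, b))
  refine ⟨fun x ↦ (f (x - x₀)).1, fun x ↦ (f (x - x₀)).2, by simp [hf₀], by simp [hf₀],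
    fun x ↦ ?_⟩
  have h := ((hf (x - x₀)).comp_sub_const x x₀).hasDerivWithinAt (s := univ)
  exact ⟨hasDerivWithinAt_univ.mp h.newtonField_fst_snd.1,
    hasDerivWithinAt_univ.mp h.newtonField_fst_snd.2⟩
end

section
/- Let α̃ be the maximal solution of α̃'' = (1/n) W'(α̃) with α̃(0) = λ > 0, α̃'(0) = 0, defined on (−l, l). Then ζ(x) := α̃(|x|) satisfies Δζ ≤ W'(ζ) on the annulus 0 < |x| < l in ℝⁿ, i.e. ζ is a supersolution of Δu = W'(u). -/
/-!
Along the radial profile the energy `α'² - (2/n) W(α)` is conserved, and since `α' (0) = 0`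
it forces `W(α) ≥ W(λ) > 0 = W(0)`; so `α` never vanishes and stays positive. Convexity makes
`W'` nonnegative on `[0, ∞)`, hence `α'' ≥ 0`, and `α' ≥ 0`, `α` nondecreasing on `[0, l)`.
By the mean value theorem and monotonicity of `W'`,
`α'(r) = r α''(ξ) = (r/n) W'(α(ξ)) ≤ (r/n) W'(α(r))`, which is the claimed inequality.
-/

open MeasureTheory Set

lemma ConvexOn.monotone_deriv {W : ℝ → ℝ} (hconv : ConvexOn ℝ univ W)
    (hd : Differentiable ℝ W) : Monotone (deriv W) :=
  monotoneOn_univ.mp (hconv.monotoneOn_deriv fun x _ => hd x)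

lemma ConvexOn.deriv_nonneg_of_isMinOn {W : ℝ → ℝ} {a t : ℝ} (hconv : ConvexOn ℝ univ W)
    (hd : Differentiable ℝ W) (hmin : IsMinOn W univ a) (hat : a ≤ t) : 0 ≤ deriv W t :=
  (hmin.isLocalMin Filter.univ_mem).deriv_eq_zero ▸ hconv.monotone_deriv hd hat

lemma MonotoneOn.of_hasDerivAt_nonneg {f f' : ℝ → ℝ} {s : Set ℝ} (hs : Convex ℝ s)
    (hf : ∀ x ∈ s, HasDerivAt f (f' x) x) (hf' : ∀ x ∈ s, 0 ≤ f' x) :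
    MonotoneOn f s := by
  refine monotoneOn_of_hasDerivWithinAt_nonneg hs
    (fun x hx => (hf x hx).continuousAt.continuousWithinAt) (fun x hx => ?_)
    (fun x hx => hf' x (interior_subset hx))
  exact (hf x (interior_subset hx)).hasDerivWithinAt

section NewtonEquation

variable {W α α' : ℝ → ℝ} {c a : ℝ} {s : Set ℝ}

lemma energy_eq_of_newton (hs : IsOpen s) (hsc : IsPreconnected s) (hW : Differentiable ℝ W)
    (hode : ∀ r ∈ s, HasDerivAt α (α' r) r ∧ HasDerivAt α' (c * deriv W (α r)) r)
    {b : ℝ} (ha : a ∈ s) (hb : b ∈ s) :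
    α' b ^ 2 - 2 * c * W (α b) = α' a ^ 2 - 2 * c * W (α a) := by
  have hE : ∀ r ∈ s, HasDerivAt (fun r => α' r ^ 2 - 2 * c * W (α r)) 0 r := by
    intro r hr
    obtain ⟨hα, hα'⟩ := hode r hr
    refine ((hα'.fun_pow 2).sub
      (((hW (α r)).hasDerivAt.comp r hα).const_mul (2 * c))).congr_deriv ?_
    norm_num
    ring
  exact hs.is_const_of_deriv_eq_zero hsc
    (fun r hr => (hE r hr).differentiableAt.differentiableWithinAt)
    (fun r hr => (hE r hr).deriv) hb ha

lemma pos_of_newton (hs : IsOpen s) (hsc : IsPreconnected s) (hW : Differentiable ℝ W)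
    (hode : ∀ r ∈ s, HasDerivAt α (α' r) r ∧ HasDerivAt α' (c * deriv W (α r)) r)
    (hc : 0 < c) (ha : a ∈ s) (hαa : 0 < α a) (hα'a : α' a = 0) (hWa : W 0 < W (α a)) :
    ∀ b ∈ s, 0 < α b := by
  have hne : ∀ b ∈ s, α b ≠ 0 := by
    intro b hb hαb
    have h := energy_eq_of_newton hs hsc hW hode ha hb
    rw [hα'a, hαb] at h
    nlinarith [sq_nonneg (α' b)]
  intro b hb
  by_contra! hαb
  obtain ⟨x, hx, hαx⟩ := hsc.intermediate_value hb ha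
    (fun x hx => (hode x hx).1.continuousAt.continuousWithinAt) ⟨hαb, hαa.le⟩
  exact hne x hx hαx

lemma deriv_le_of_newton (hs : IsOpen s) (hsc : Convex ℝ s) (hW : Differentiable ℝ W)
    (hconv : ConvexOn ℝ univ W) (hmin : IsMinOn W univ 0)
    (hode : ∀ r ∈ s, HasDerivAt α (α' r) r ∧ HasDerivAt α' (c * deriv W (α r)) r)
    (hc : 0 < c) (ha : a ∈ s) (hαa : 0 < α a) (hα'a : α' a = 0) (hWa : W 0 < W (α a))
    {r : ℝ} (hr : r ∈ s) (har : a ≤ r) :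
    α' r ≤ (r - a) * (c * deriv W (α r)) := by
  have hpos := pos_of_newton hs hsc.isPreconnected hW hode hc ha hαa hα'a hWa
  have hα'mono : MonotoneOn α' s :=
    .of_hasDerivAt_nonneg hsc (fun x hx => (hode x hx).2) fun x hx =>
      mul_nonneg hc.le (hconv.deriv_nonneg_of_isMinOn hW hmin (hpos x hx).le)
  have hαmono : MonotoneOn α (s ∩ Ici a) :=
    .of_hasDerivAt_nonneg (hsc.inter (convex_Ici a)) (fun x hx => (hode x hx.1).1)
      fun x hx => hα'a ▸ hα'mono ha hx.1 hx.2
  rcases har.eq_or_lt with rfl | har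
  · simp [hα'a]
  have hsub : Icc a r ⊆ s := hsc.ordConnected.out ha hr
  obtain ⟨ξ, hξ, hξeq⟩ := exists_hasDerivAt_eq_slope α' (fun x => c * deriv W (α x)) har
    (fun x hx => (hode x (hsub hx)).2.continuousAt.continuousWithinAt)
    (fun x hx => (hode x (hsub (Ioo_subset_Icc_self hx))).2)
  rw [hα'a, sub_zero, eq_div_iff (sub_ne_zero.2 har.ne')] at hξeq
  have hαξ : α ξ ≤ α r := hαmono ⟨hsub (Ioo_subset_Icc_self hξ), hξ.1.le⟩ ⟨hr, har.le⟩ hξ.2.le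
  calc α' r = (r - a) * (c * deriv W (α ξ)) := by rw [← hξeq]; ring
    _ ≤ (r - a) * (c * deriv W (α r)) := by
      gcongr
      exact hconv.monotone_deriv hW hαξ

end NewtonEquation

theorem radial_supersolution_general
    (W : ℝ → ℝ) (hW : ContDiff ℝ 2 W) (hWnn : ∀ t, 0 ≤ W t)
    (hWconv : ConvexOn ℝ Set.univ W) (hWvan : ∀ t, W t = 0 ↔ t = 0)
    (n : ℕ) (hn : 1 ≤ n) (lam l : ℝ) (hlam : 0 < lam)
    (α α' : ℝ → ℝ)
    (hα0 : α 0 = lam) (hα'0 : α' 0 = 0)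
    (hode : ∀ r ∈ Ioo (-l) l,
      HasDerivAt α (α' r) r ∧ HasDerivAt α' ((1 / n) * deriv W (α r)) r) :
    -- ζ(x) = α(|x|) is a supersolution of Δu = W'(u): in radial coordinates,
    -- Δζ = α''(r) + ((n-1)/r) α'(r) ≤ W'(α(r)) for 0 < r < l.
    ∀ r ∈ Ioo (0:ℝ) l,
      (1 / n) * deriv W (α r) + ((n - 1 : ℝ) / r) * α' r ≤ deriv W (α r) := by
  intro r hr
  have hn' : (1 : ℝ) ≤ n := by exact_mod_cast hn
  have hW0 : W 0 = 0 := (hWvan 0).2 rfl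
  have hWlam : W 0 < W lam := by
    rw [hW0]
    exact (hWnn lam).lt_of_ne fun h => hlam.ne' ((hWvan lam).1 h.symm)
  have hmin : IsMinOn W univ 0 := fun t _ => show W 0 ≤ W t by rw [hW0]; exact hWnn t
  have hbound : α' r ≤ r * ((1 / n) * deriv W (α r)) := by
    simpa using deriv_le_of_newton isOpen_Ioo (convex_Ioo _ _)
      (hW.differentiable (by norm_num)) hWconv hmin hode
      (by positivity) ⟨by linarith [hr.1, hr.2], hr.1.trans hr.2⟩ (hα0 ▸ hlam) hα'0
      (hα0 ▸ hWlam) ⟨by linarith [hr.1, hr.2], hr.2⟩ hr.1.le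
  calc (1 / n) * deriv W (α r) + ((n - 1 : ℝ) / r) * α' r
      ≤ (1 / n) * deriv W (α r) + ((n - 1 : ℝ) / r) * (r * ((1 / n) * deriv W (α r))) := by
        gcongr
        exact div_nonneg (by linarith) hr.1.le
    _ = deriv W (α r) := by
        field_simp [hr.1.ne']
        ring

theorem radial_supersolution
    (W : ℝ → ℝ) (hW : ContDiff ℝ 2 W) (hWnn : ∀ t, 0 ≤ W t)
    (hWconv : ConvexOn ℝ Set.univ W) (hWvan : ∀ t, W t = 0 ↔ t = 0)
    (hWint : IntegrableOn (fun u => 1 / Real.sqrt (W u)) {u : ℝ | 1 < |u|})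
    (n : ℕ) (hn : 1 ≤ n) (lam l : ℝ) (hlam : 0 < lam) (hl : 0 < l)
    (α α' : ℝ → ℝ)
    (hα0 : α 0 = lam) (hα'0 : α' 0 = 0)
    (hode : ∀ r ∈ Ioo (-l) l,
      HasDerivAt α (α' r) r ∧ HasDerivAt α' ((1 / n) * deriv W (α r)) r) :
    -- ζ(x) = α(|x|) is a supersolution of Δu = W'(u): in radial coordinates,
    -- Δζ = α''(r) + ((n-1)/r) α'(r) ≤ W'(α(r)) for 0 < r < l.
    ∀ r ∈ Ioo (0:ℝ) l,
      (1 / n) * deriv W (α r) + ((n - 1 : ℝ) / r) * α' r ≤ deriv W (α r) :=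
  radial_supersolution_general W hW hWnn hWconv hWvan n hn lam l hlam α α' hα0 hα'0 hode
end

section
/- Fix η > 0, δ ∈ (0, ¼), and let φ : ℝ → ℝ be continuous with φ = 0 on [0,∞), φ(t) = −μ W'(t) on [−η, 0], and φ(t) = φ(−t−2η) for t ≤ −η, where μ > 0 satisfies μ ∫_{−η}^0 (−W') = δ. Define Φ(t) = ∫_{−∞}^t φ + (1−δ) and f(t) = ∫₀^t Φ + 2η. Then f is smooth, convex, strictly increasing, f(t) = 2η + (1+δ)t for t ≥ 0, f(t) = (1−δ)(t+2η) for t ≤ −2η, and f(t) > η + t for all t ∈ ℝ. -/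
open MeasureTheory Set

theorem comparison_function_properties
    (W : ℝ → ℝ) (hW : ContDiff ℝ 2 W) (hWnn : ∀ t, 0 ≤ W t)
    (hWconv : ConvexOn ℝ Set.univ W) (hWvan : ∀ t, W t = 0 ↔ t = 0)
    (hW'mono : Monotone (deriv W))
    (η μ δ : ℝ) (hη : 0 < η) (hμ : 0 < μ)
    (hδ : δ = μ * ∫ s in Ioc (-η) 0, (-(deriv W s)))
    (hδmem : δ ∈ Ioo (0:ℝ) (1/4))
    (φ : ℝ → ℝ) (hφcont : Continuous φ)
    (hφpos : ∀ t, 0 ≤ t → φ t = 0)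
    (hφmid : ∀ t ∈ Icc (-η) 0, φ t = -(μ * deriv W t))
    (hφrefl : ∀ t, t ≤ -η → φ t = φ (-t - 2*η))
    (Φ f : ℝ → ℝ)
    (hΦ : ∀ t, Φ t = (∫ s in Iic t, φ s) + (1 - δ))
    (hf : ∀ t, f t = (∫ s in (0:ℝ)..t, Φ s) + 2*η) :
    ContDiff ℝ 2 f ∧ ConvexOn ℝ Set.univ f ∧ StrictMono f ∧
      (∀ t, 0 ≤ t → f t = 2*η + (1+δ)*t) ∧
      (∀ t, t ≤ -(2*η) → f t = (1-δ)*(t + 2*η)) ∧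
      (∀ t, η + t < f t) := by
  obtain ⟨hδ0, hδ4⟩ := hδmem
  have hW0 : W 0 = 0 := (hWvan 0).mpr rfl
  have hW'0 : deriv W 0 = 0 := by
    have hmin : IsLocalMin W 0 := Filter.Eventually.of_forall fun x => by
      rw [hW0]; exact hWnn x
    exact hmin.deriv_eq_zero
  have hφrefl' : ∀ t, φ (-(2*η) - t) = φ t := by
    intro t
    rcases le_or_gt t (-η) with h | h
    · rw [hφrefl t h]; ring_nf
    · have h2 : -(2*η) - t ≤ -η := by linarith
      rw [hφrefl _ h2]; ring_nf
  have hφzero' : ∀ t, t ≤ -(2*η) → φ t = 0 := by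
    intro t ht
    rw [hφrefl t (by linarith)]
    exact hφpos _ (by linarith)
  have hφnn : ∀ t, 0 ≤ φ t := by
    intro t
    rcases le_or_gt 0 t with h | h
    · rw [hφpos t h]
    rcases le_or_gt (-η) t with h2 | h2
    · rw [hφmid t ⟨h2, h.le⟩]
      have : deriv W t ≤ 0 := hW'0 ▸ hW'mono h.le
      nlinarith
    · rw [hφrefl t h2.le]
      rcases le_or_gt 0 (-t - 2*η) with h3 | h3
      · rw [hφpos _ h3]
      · rw [hφmid _ ⟨by linarith, h3.le⟩]
        have : deriv W (-t - 2*η) ≤ 0 := hW'0 ▸ hW'mono (by linarith)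
        nlinarith
  have hφint : Integrable φ := by
    have hsupp : HasCompactSupport φ := by
      apply HasCompactSupport.intro (isCompact_Icc (a := -(2*η)) (b := 0))
      intro x hx
      simp only [mem_Icc, not_and_or, not_le] at hx
      rcases hx with h | h
      · exact hφzero' x h.le
      · exact hφpos x h.le
    exact hφcont.integrable_of_hasCompactSupport hsupp
  have hIicG : ∀ t, (∫ s in Iic t, φ s) = ∫ s in (-(2*η))..t, φ s := by
    intro t
    have h1 := intervalIntegral.integral_Iic_sub_Iic
      (μ := volume) (f := φ) (a := -(2*η)) (b := t)
      hφint.integrableOn hφint.integrableOn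
    have h2 : (∫ s in Iic (-(2*η)), φ s) = 0 := by
      rw [setIntegral_congr_fun measurableSet_Iic
        (fun s hs => hφzero' s hs)]
      simp
    rw [h2, sub_zero] at h1
    exact h1
  have hGadd : ∀ a b : ℝ, ((∫ s in (-(2*η))..a, φ s) + ∫ s in a..b, φ s)
      = ∫ s in (-(2*η))..b, φ s := fun a b =>
    intervalIntegral.integral_add_adjacent_intervals hφint.intervalIntegrable
      hφint.intervalIntegrable
  have hmidint : (∫ s in (-η)..0, φ s) = δ := by
    rw [intervalIntegral.integral_of_le (by linarith)]
    rw [setIntegral_congr_fun measurableSet_Ioc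
      (fun s hs => hφmid s ⟨hs.1.le, hs.2⟩)]
    rw [hδ, ← integral_const_mul]
    congr 1; ext s; ring
  have hleftint : (∫ s in (-(2*η))..(-η), φ s) = δ := by
    have hc : ∀ s ∈ uIcc (-(2*η)) (-η), φ s = φ (-(2*η) - s) := fun s _ => (hφrefl' s).symm
    rw [intervalIntegral.integral_congr hc, intervalIntegral.integral_comp_sub_left φ (-(2*η))]
    have e1 : -(2*η) - -η = -η := by ring
    have e2 : -(2*η) - -(2*η) = (0:ℝ) := by ring
    rw [e1, e2, hmidint]
  have hG0 : (∫ s in (-(2*η))..(0:ℝ), φ s) = 2*δ := by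
    rw [← hGadd (-η) 0, hleftint, hmidint]; ring
  have hGlow : ∀ t, t ≤ -(2*η) → (∫ s in (-(2*η))..t, φ s) = 0 := by
    intro t ht
    have h0 : (∫ s in t..(-(2*η)), φ s) = 0 := by
      rw [intervalIntegral.integral_congr (g := fun _ => (0:ℝ)) (fun s hs => by
        rw [uIcc_of_le ht] at hs; exact hφzero' s hs.2)]
      simp
    have := hGadd t (-(2*η))
    rw [intervalIntegral.integral_same, h0] at this
    linarith
  have hGhigh : ∀ t, 0 ≤ t → (∫ s in (-(2*η))..t, φ s) = 2*δ := by
    intro t ht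
    have h0 : (∫ s in (0:ℝ)..t, φ s) = 0 := by
      rw [intervalIntegral.integral_congr (g := fun _ => (0:ℝ)) (fun s hs => by
        rw [uIcc_of_le ht] at hs; exact hφpos s hs.1)]
      simp
    rw [← hGadd 0 t, hG0, h0]; ring
  have hGmono : Monotone (fun t => ∫ s in (-(2*η))..t, φ s) := by
    intro a b hab
    simp only
    rw [← hGadd a b]
    have : 0 ≤ ∫ s in a..b, φ s :=
      intervalIntegral.integral_nonneg hab fun u _ => hφnn u
    linarith
  have hGnn : ∀ t, 0 ≤ ∫ s in (-(2*η))..t, φ s := by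
    intro t
    rcases le_or_gt t (-(2*η)) with h | h
    · rw [hGlow t h]
    · rw [← hGlow (-(2*η)) le_rfl]; exact hGmono h.le
  have hGle : ∀ t, (∫ s in (-(2*η))..t, φ s) ≤ 2*δ := by
    intro t
    rcases le_or_gt 0 t with h | h
    · rw [hGhigh t h]
    · rw [← hG0]; exact hGmono h.le
  have hGrefl : ∀ t, ((∫ s in (-(2*η))..t, φ s) + ∫ s in (-(2*η))..(-(2*η)-t), φ s) = 2*δ := by
    intro t
    have h1 : (∫ s in (-(2*η))..(-(2*η)-t), φ s) = ∫ s in t..0, φ s := by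
      have h2 := intervalIntegral.integral_comp_sub_left (a := t) (b := (0:ℝ)) φ (-(2*η))
      rw [sub_zero] at h2
      rw [← h2]
      exact intervalIntegral.integral_congr fun s _ => hφrefl' s
    rw [h1, hGadd t 0, hG0]
  have hΦeq : ∀ t, Φ t = (∫ s in (-(2*η))..t, φ s) + (1 - δ) := fun t => by
    rw [hΦ, hIicG]
  have hΦfun : Φ = fun t => (∫ s in (-(2*η))..t, φ s) + (1 - δ) := funext hΦeq
  have hΦd : ∀ t, HasDerivAt Φ (φ t) t := by
    intro t
    rw [hΦfun]
    exact ((intervalIntegral.integral_hasDerivAt_right hφint.intervalIntegrable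
      (hφcont.stronglyMeasurableAtFilter _ _) hφcont.continuousAt)).add_const _
  have hΦcont : Continuous Φ := by
    have : Differentiable ℝ Φ := fun t => (hΦd t).differentiableAt
    exact this.continuous
  have hΦpos : ∀ t, 0 < Φ t := fun t => by
    rw [hΦeq]; nlinarith [hGnn t]
  have hΦle : ∀ t, Φ t ≤ 1 + δ := fun t => by
    rw [hΦeq]; have := hGle t; linarith
  have hΦhigh : ∀ t, 0 ≤ t → Φ t = 1 + δ := fun t ht => by
    rw [hΦeq, hGhigh t ht]; ring
  have hΦlow : ∀ t, t ≤ -(2*η) → Φ t = 1 - δ := fun t ht => by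
    rw [hΦeq, hGlow t ht]; ring
  have hΦrefl : ∀ t, Φ t + Φ (-(2*η) - t) = 2 := fun t => by
    rw [hΦeq, hΦeq]; have := hGrefl t; linarith
  have hfd : ∀ t, HasDerivAt f (Φ t) t := by
    intro t
    have hffun : f = fun t => (∫ s in (0:ℝ)..t, Φ s) + 2*η := funext hf
    rw [hffun]
    exact ((intervalIntegral.integral_hasDerivAt_right
      (hΦcont.intervalIntegrable _ _)
      (hΦcont.stronglyMeasurableAtFilter _ _) hΦcont.continuousAt)).add_const _
  have hfdiff : Differentiable ℝ f := fun t => (hfd t).differentiableAt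
  have hfderiv : deriv f = Φ := funext fun t => (hfd t).deriv
  have hfpos : ∀ t, 0 ≤ t → f t = 2*η + (1+δ)*t := by
    intro t ht
    rw [hf]
    have h1 : (∫ s in (0:ℝ)..t, Φ s) = ∫ s in (0:ℝ)..t, (1+δ) := by
      apply intervalIntegral.integral_congr
      intro s hs
      rw [uIcc_of_le ht] at hs
      exact hΦhigh s hs.1
    rw [h1, intervalIntegral.integral_const, smul_eq_mul]
    ring
  have hfneg : ∀ t, t ≤ -(2*η) → f t = (1-δ)*(t + 2*η) := by
    intro t ht
    have hΦc2 : Continuous (fun s : ℝ => Φ (-(2*η) - s)) :=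
      hΦcont.comp (continuous_const.sub continuous_id)
    have hI : (∫ s in (-(2*η))..(0:ℝ), Φ s) = 2*η := by
      have hrefl : (∫ s in (-(2*η))..(0:ℝ), Φ s)
          = ∫ s in (-(2*η))..(0:ℝ), Φ (-(2*η) - s) := by
        have h2 := intervalIntegral.integral_comp_sub_left
          (a := -(2*η)) (b := (0:ℝ)) Φ (-(2*η))
        rw [sub_zero, sub_neg_eq_add, neg_add_cancel] at h2
        rw [h2]
      have hsum : ((∫ s in (-(2*η))..(0:ℝ), Φ s)
            + ∫ s in (-(2*η))..(0:ℝ), Φ (-(2*η) - s))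
          = ∫ s in (-(2*η))..(0:ℝ), (2:ℝ) := by
        rw [← intervalIntegral.integral_add (hΦcont.intervalIntegrable _ _)
          (hΦc2.intervalIntegrable _ _)]
        exact intervalIntegral.integral_congr fun s _ => hΦrefl s
      rw [intervalIntegral.integral_const, ← hrefl, smul_eq_mul] at hsum
      linarith
    have hf2η : f (-(2*η)) = 0 := by
      rw [hf]
      rw [intervalIntegral.integral_symm, hI]
      ring
    have hsplit : f t = f (-(2*η)) + ∫ s in (-(2*η))..t, Φ s := by
      rw [hf, hf]
      have h3 := intervalIntegral.integral_add_adjacent_intervals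
        (hΦcont.intervalIntegrable (μ := volume) (0:ℝ) (-(2*η))) (hΦcont.intervalIntegrable (μ := volume) (-(2*η)) t)
      linarith
    have hconst : (∫ s in (-(2*η))..t, Φ s) = (1-δ)*(t + 2*η) := by
      rw [intervalIntegral.integral_congr (g := fun _ => (1-δ))
        (fun s hs => by
          rw [uIcc_of_ge ht] at hs
          exact hΦlow s hs.2),
        intervalIntegral.integral_const, smul_eq_mul]
      ring
    rw [hsplit, hf2η, hconst]; ring
  refine ⟨?_, ?_, ?_, hfpos, hfneg, ?_⟩
  · have h1 : ContDiff ℝ 1 Φ := contDiff_one_iff_deriv.mpr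
      ⟨fun t => (hΦd t).differentiableAt, by
        have : deriv Φ = φ := funext fun t => (hΦd t).deriv
        rw [this]; exact hφcont⟩
    have h2 : (2 : WithTop ℕ∞) = 1 + 1 := by norm_num
    rw [h2, contDiff_succ_iff_deriv]
    refine ⟨hfdiff, by simp, ?_⟩
    rw [hfderiv]; exact h1
  · apply Monotone.convexOn_univ_of_deriv hfdiff
    rw [hfderiv]
    intro a b hab
    rw [hΦeq, hΦeq]
    have := hGmono hab
    simp only at this
    linarith
  · exact strictMono_of_deriv_pos fun t => by rw [hfderiv]; exact hΦpos t
  · intro t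
    rcases le_or_gt 0 t with h | h
    · rw [hfpos t h]; nlinarith [mul_nonneg hδ0.le h]
    rcases le_or_gt t (-(2*η)) with h2 | h2
    · rw [hfneg t h2]; nlinarith
    · have hfub : 2*η + (1+δ)*t ≤ f t := by
        rw [hf]
        have h1 : (∫ s in (0:ℝ)..t, Φ s) = -(∫ s in t..(0:ℝ), Φ s) :=
          intervalIntegral.integral_symm _ _
        have h2' : (∫ s in t..(0:ℝ), Φ s) ≤ ∫ s in t..(0:ℝ), (1+δ) := by
          apply intervalIntegral.integral_mono_on h.le
            (hΦcont.intervalIntegrable _ _) intervalIntegrable_const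
          intro s _
          exact hΦle s
        rw [intervalIntegral.integral_const, smul_eq_mul] at h2'
        rw [h1]
        nlinarith
      nlinarith
end
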